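/- arXiv:1704.08627 — 11 statements merged into one kernel-verified Lean document; each statement's English description precedes it below -/
import Mathlib

section
/- Let q = 2^ℓ, let a, b be integers with 0 ≤ a, b ≤ q - 1 and a + b < 2(q - 1), and let P(X,Y) = X^a Y^b. For any α, β ∈ F_q with α, β ≠ 0, consider the univariate polynomial P|_L(T) = T^a (αT + β)^b reduced modulo T^q − T to degree at most q − 1. Then the coefficient of T^{q−1} in P|_L is zero if and only if (q − 1 − a) is not in the 2-shadow of b. Moreover, if (q − 1 − a) ≤₂ b, then this coefficient equals α^{−a} β^{a+b}. -/
open Polynomial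

/-- `Shadow2 n m` : every bit set in `n` is also set in `m` (i.e. `n ≤₂ m`). -/
def Shadow2 (n m : ℕ) : Prop := ∀ i, n.testBit i = true → m.testBit i = true

lemma Shadow2.le' {n m : ℕ} (h : Shadow2 n m) : n ≤ m := by
  have hand : n &&& m = n := by
    apply Nat.eq_of_testBit_eq
    intro i
    rw [Nat.testBit_and]
    cases hni : n.testBit i
    · simp
    · simp [h i hni]
  calc n = n &&& m := hand.symm
    _ ≤ m := Nat.and_le_right

instance (n m : ℕ) : Decidable (Shadow2 n m) :=
  decidable_of_iff (n &&& m = n) (by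
    constructor
    · intro h i hi
      have := congrArg (fun x => x.testBit i) h
      simp only [Nat.testBit_and] at this
      rw [hi] at this
      simpa using this.symm
    · intro h
      apply Nat.eq_of_testBit_eq
      intro i
      rw [Nat.testBit_and]
      cases hni : n.testBit i
      · simp
      · simp [h i hni])

lemma shadow2_rec (k b : ℕ) :
    Shadow2 k b ↔ ((k % 2 = 1 → b % 2 = 1) ∧ Shadow2 (k / 2) (b / 2)) := by
  constructor
  · intro h
    refine ⟨fun hk => ?_, fun i hi => ?_⟩
    · have := h 0 (by simp [hk])
      simpa using this
    · rw [Nat.testBit_div_two] at hi ⊢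
      exact h (i + 1) hi
  · rintro ⟨h0, h⟩ i hi
    cases i with
    | zero => simp at hi ⊢; exact h0 hi
    | succ i =>
      rw [← Nat.testBit_div_two] at hi ⊢
      exact h i hi

lemma choose_mod_two (b k : ℕ) : Nat.choose b k % 2 = if Shadow2 k b then 1 else 0 := by
  induction b using Nat.strong_induction_on generalizing k with
  | _ b IH =>
    rcases Nat.eq_zero_or_pos b with rfl | hbpos
    · rcases Nat.eq_zero_or_pos k with rfl | hk
      · simp [Shadow2]
      · rw [Nat.choose_eq_zero_of_lt hk,
          if_neg (fun h => by have := h.le'; omega)]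
    · haveI : Fact (Nat.Prime 2) := ⟨Nat.prime_two⟩
      have hmod := @Choose.choose_modEq_choose_mod_mul_choose_div_nat b k 2 _
      rw [Nat.ModEq] at hmod
      rw [hmod, Nat.mul_mod, IH (b / 2) (Nat.div_lt_self hbpos one_lt_two) (k / 2)]
      rw [if_congr (shadow2_rec k b) rfl rfl]
      rcases Nat.mod_two_eq_zero_or_one b with hb2 | hb2 <;>
        rcases Nat.mod_two_eq_zero_or_one k with hk2 | hk2 <;>
        simp [hb2, hk2] <;> split_ifs <;> simp_all

lemma cast_choose_char_two (F : Type*) [Field F] [CharP F 2] (b k : ℕ) :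
    ((Nat.choose b k : ℕ) : F) = if Shadow2 k b then 1 else 0 := by
  have h := Nat.div_add_mod (Nat.choose b k) 2
  have h2 : (2 : F) = 0 := by exact_mod_cast CharP.cast_eq_zero F 2
  conv_lhs => rw [← h]
  push_cast
  rw [h2, zero_mul, zero_add, choose_mod_two]
  split_ifs <;> simp

/-- Restriction of the monomial `X^a Y^b` to the simple line `L(T) = (T, αT + β)`:
the coefficient of `T^(q-1)` in `T^a (αT+β)^b mod (T^q - T)` vanishes iff
`q - 1 - a` is not in the 2-shadow of `b`; and if it is, the coefficient is
`α^(-a) β^(a+b)`. -/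
theorem monomial_restriction (ℓ : ℕ) (F : Type*) [Field F] [Fintype F]
    (hF : Fintype.card F = 2 ^ ℓ) (q : ℕ) (hq : q = 2 ^ ℓ)
    (a b : ℕ) (ha : a ≤ q - 1) (hb : b ≤ q - 1) (hab : a + b < 2 * (q - 1))
    (α β : F) (hα : α ≠ 0) (hβ : β ≠ 0) :
    (((X ^ a * (C α * X + C β) ^ b : F[X]) %ₘ (X ^ q - X)).coeff (q - 1) = 0 ↔
      ¬ Shadow2 (q - 1 - a) b) ∧
    (Shadow2 (q - 1 - a) b →
      ((X ^ a * (C α * X + C β) ^ b : F[X]) %ₘ (X ^ q - X)).coeff (q - 1)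
        = α⁻¹ ^ a * β ^ (a + b)) := by
  -- basic facts
  have hcard : Fintype.card F = q := by rw [hF, hq]
  have hq2 : 2 ≤ q := hcard ▸ Fintype.one_lt_card
  -- characteristic 2
  haveI : CharP F (ringChar F) := ringChar.charP F
  have hprime : (ringChar F).Prime := CharP.char_is_prime F (ringChar F)
  obtain ⟨n, -, hcard'⟩ := FiniteField.card F (ringChar F)
  have hchar2 : ringChar F = 2 := by
    have hdvd : ringChar F ∣ 2 ^ ℓ := by
      rw [← hF, hcard']
      exact dvd_pow_self _ (by positivity)
    exact (Nat.prime_dvd_prime_iff_eq hprime Nat.prime_two).mp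
      (hprime.dvd_of_dvd_pow hdvd)
  haveI : CharP F 2 := hchar2 ▸ ringChar.charP F
  -- the divisor
  set D : F[X] := X ^ q - X with hD
  have hmonic : D.Monic := by
    apply monic_X_pow_sub
    rw [degree_X]
    exact_mod_cast hq2
  have hdegD : D.degree = q := by
    rw [hD, degree_sub_eq_left_of_degree_lt, degree_X_pow]
    rw [degree_X_pow, degree_X]
    exact_mod_cast hq2
  -- reduction of monomials
  have hred : ∀ m : ℕ, m ≤ 2 * q - 3 →
      ((X ^ m : F[X]) %ₘ D).coeff (q - 1) = if m = q - 1 then (1 : F) else 0 := by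
    intro m hm
    by_cases hmq : m < q
    · have hdeg : (X ^ m : F[X]).degree < D.degree := by
        rw [degree_X_pow, hdegD]
        exact_mod_cast hmq
      rw [(modByMonic_eq_self_iff hmonic).mpr hdeg, coeff_X_pow]
      split_ifs <;> first | rfl | omega
    · push_neg at hmq
      have key : (X ^ m : F[X]) = X ^ (m - q + 1) + D * X ^ (m - q) := by
        have h1 : q + (m - q) = m := by omega
        rw [hD, sub_mul, ← pow_add, h1, ← pow_succ']
        ring
      have hdeg : (X ^ (m - q + 1) : F[X]).degree < D.degree := by
        rw [degree_X_pow, hdegD]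
        exact_mod_cast (show m - q + 1 < q by omega)
      rw [key, add_modByMonic, self_mul_modByMonic hmonic, add_zero,
        (modByMonic_eq_self_iff hmonic).mpr hdeg, coeff_X_pow,
        if_neg (show ¬(q - 1 = m - q + 1) by omega),
        if_neg (show ¬(m = q - 1) by omega)]
  -- expand the product as a sum of monomials
  have hexp : (X ^ a * (C α * X + C β) ^ b : F[X]) =
      ∑ k ∈ Finset.range (b + 1),
        (α ^ k * β ^ (b - k) * (Nat.choose b k : F)) • X ^ (a + k) := by
    rw [add_pow, Finset.mul_sum]
    refine Finset.sum_congr rfl fun k hk => ?_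
    rw [mul_pow, ← C_pow, ← C_pow, smul_eq_C_mul, C_mul, C_mul, C_eq_natCast]
    ring
  -- the coefficient
  have hcoeff : ((X ^ a * (C α * X + C β) ^ b : F[X]) %ₘ D).coeff (q - 1) =
      ∑ k ∈ Finset.range (b + 1),
        (α ^ k * β ^ (b - k) * (Nat.choose b k : F)) *
          (if a + k = q - 1 then (1 : F) else 0) := by
    rw [hexp]
    have : (∑ k ∈ Finset.range (b + 1),
        (α ^ k * β ^ (b - k) * (Nat.choose b k : F)) • X ^ (a + k)) %ₘ D =
        ∑ k ∈ Finset.range (b + 1),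
          (α ^ k * β ^ (b - k) * (Nat.choose b k : F)) • ((X ^ (a + k) : F[X]) %ₘ D) := by
      show modByMonicHom D _ = _
      rw [map_sum]
      simp [modByMonicHom]
    rw [this, finset_sum_coeff]
    apply Finset.sum_congr rfl
    intro k hk
    rw [coeff_smul, hred (a + k) (by simp only [Finset.mem_range] at hk; omega)]
    simp [smul_eq_mul]
  -- collapse the sum
  set k0 := q - 1 - a with hk0
  have hsum : ((X ^ a * (C α * X + C β) ^ b : F[X]) %ₘ D).coeff (q - 1) =
      if k0 ≤ b then α ^ k0 * β ^ (b - k0) * (Nat.choose b k0 : F) else 0 := by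
    rw [hcoeff]
    rw [Finset.sum_congr rfl (fun k hk => ?_)]
    · rw [Finset.sum_ite_eq' (Finset.range (b + 1)) k0
        (fun k => α ^ k * β ^ (b - k) * (Nat.choose b k : F))]
      simp only [Finset.mem_range]
      congr 1
      simp only [eq_iff_iff]
      omega
    · have : a + k = q - 1 ↔ k = k0 := by omega
      simp only [mul_ite, mul_one, mul_zero, this]
  rw [cast_choose_char_two F b k0] at hsum
  by_cases hS : Shadow2 k0 b
  · have hk0b : k0 ≤ b := hS.le'
    rw [if_pos hk0b, if_pos hS, mul_one] at hsum
    have hval : α ^ k0 * β ^ (b - k0) = α⁻¹ ^ a * β ^ (a + b) := by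
      have hαq : α ^ (q - 1) = 1 := by
        have := FiniteField.pow_card_sub_one_eq_one α hα
        rwa [hcard] at this
      have hβq : β ^ (q - 1) = 1 := by
        have := FiniteField.pow_card_sub_one_eq_one β hβ
        rwa [hcard] at this
      have h1 : α ^ k0 * α ^ a = 1 := by
        rw [← pow_add, show k0 + a = q - 1 by omega, hαq]
      have h2 : α ^ k0 = α⁻¹ ^ a := by
        rw [inv_pow]
        exact eq_inv_of_mul_eq_one_left h1
      have h3 : β ^ (a + b) = β ^ (b - k0) := by
        rw [show a + b = (b - k0) + (q - 1) by omega, pow_add, hβq, mul_one]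
      rw [h2, h3]
    constructor
    · rw [hsum, hval]
      constructor
      · intro h0
        exfalso
        apply mul_ne_zero (pow_ne_zero _ (inv_ne_zero hα)) (pow_ne_zero _ hβ) h0
      · intro h; exact absurd hS h
    · intro _
      rw [hsum, hval]
  · constructor
    · refine ⟨fun _ => hS, fun _ => ?_⟩
      rw [hsum]
      split_ifs <;> simp
    · intro h; exact absurd h hS
end

section
/- Let q = 2^ℓ. For every α, β ∈ F_q with α, β ≠ 0, the restriction of P(X,Y) = X^{q−1} Y^{q−1} to the line L(T) = (T, αT + β), reduced modulo T^q − T, has degree strictly less than q − 1; i.e., its coefficient on T^{q−1} is zero. -/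
open Polynomial

/-- The restriction of `X^(q-1) Y^(q-1)` to any simple line `L(T) = (T, αT+β)`
(with `α, β ≠ 0`), reduced mod `T^q - T`, has degree strictly less than `q - 1`;
in particular its coefficient on `T^(q-1)` is zero. -/
theorem special_monomial_restriction (ℓ : ℕ) (F : Type*) [Field F] [Fintype F]
    (hF : Fintype.card F = 2 ^ ℓ) (q : ℕ) (hq : q = 2 ^ ℓ)
    (α β : F) (hα : α ≠ 0) (hβ : β ≠ 0) :
    ((X ^ (q - 1) * (C α * X + C β) ^ (q - 1) : F[X]) %ₘ (X ^ q - X)).degree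
        < ((q - 1 : ℕ) : WithBot ℕ) ∧
    ((X ^ (q - 1) * (C α * X + C β) ^ (q - 1) : F[X]) %ₘ (X ^ q - X)).coeff (q - 1) = 0 := by
  -- basic numerics
  have hℓ : ℓ ≠ 0 := by
    rintro rfl
    have := Fintype.one_lt_card (α := F)
    omega
  have hq2 : 2 ≤ q := by
    subst hq
    calc 2 = 2 ^ 1 := by norm_num
    _ ≤ 2 ^ ℓ := Nat.pow_le_pow_right (by norm_num) (by omega)
  have hq1 : 1 ≤ q - 1 := by omega
  -- characteristic two
  have h2 : (2 : F) = 0 := by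
    have hcast : ((Fintype.card F : ℕ) : F) = 0 := FiniteField.cast_card_eq_zero F
    rw [hF] at hcast
    push_cast at hcast
    exact pow_eq_zero_iff hℓ |>.mp hcast
  -- x ^ (q-1) = 1 for nonzero x
  have hpow : ∀ x : F, x ≠ 0 → x ^ (q - 1) = 1 := by
    intro x hx
    have := FiniteField.pow_card_sub_one_eq_one x hx
    rwa [hF, ← hq] at this
  set S : F[X] := (C α * X + C β) ^ (q - 1) with hSdef
  set c0 : F := S.coeff 0 with hc0def
  set r : F[X] := C c0 * X ^ (q - 1) + (S - C c0) with hrdef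
  have hS : X * S.divX + C c0 = S := X_mul_divX_add S
  have hXq : (X : F[X]) ^ q = X ^ (q - 1) * X := by
    rw [← pow_succ]
    congr 1
    omega
  have key : r + (X ^ q - X) * S.divX = X ^ (q - 1) * S := by
    rw [hrdef, hXq]
    linear_combination ((X : F[X]) ^ (q - 1) - 1) * hS
  -- degree bounds
  have hdS : S.degree ≤ ((q - 1 : ℕ) : WithBot ℕ) := by
    refine le_trans (degree_le_natDegree) ?_
    have : S.natDegree ≤ q - 1 := by
      rw [hSdef]
      refine le_trans (natDegree_pow_le) ?_
      have h := natDegree_linear_le (a := α) (b := β)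
      nlinarith [h]
    exact_mod_cast this
  have hq1lt : ((q - 1 : ℕ) : WithBot ℕ) < (q : ℕ) := by
    exact_mod_cast (show q - 1 < q by omega)
  have hdr : r.degree < ((q : ℕ) : WithBot ℕ) := by
    rw [hrdef]
    refine lt_of_le_of_lt (degree_add_le _ _) (max_lt ?_ ?_)
    · exact lt_of_le_of_lt (degree_C_mul_X_pow_le _ _) hq1lt
    · refine lt_of_le_of_lt (degree_sub_le _ _) (max_lt (lt_of_le_of_lt hdS hq1lt) ?_)
      exact lt_of_le_of_lt (degree_C_le) (lt_of_le_of_lt (by exact_mod_cast Nat.zero_le _) hq1lt)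
  have hmonic : Monic ((X : F[X]) ^ q - X) := by
    apply monic_X_pow_sub
    refine lt_of_le_of_lt degree_X_le ?_
    exact_mod_cast (show 1 < q by omega)
  have hXltXq : (X : F[X]).degree < ((X : F[X]) ^ q).degree := by
    rw [degree_X_pow]
    exact lt_of_le_of_lt degree_X_le (by exact_mod_cast (show 1 < q by omega))
  have hdegg : ((X : F[X]) ^ q - X).degree = ((q : ℕ) : WithBot ℕ) := by
    rw [degree_sub_eq_left_of_degree_lt hXltXq, degree_X_pow]
  have huniq := (div_modByMonic_unique S.divX r hmonic ⟨key, by rwa [hdegg]⟩).2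
  rw [huniq]
  -- compute coefficients of S
  have hndS : S.natDegree = q - 1 := by
    rw [hSdef, natDegree_pow, natDegree_linear hα, mul_one]
  have hStop : S.coeff (q - 1) = 1 := by
    rw [← hndS, coeff_natDegree, hSdef, leadingCoeff_pow, leadingCoeff_linear hα]
    exact hpow α hα
  have hc0 : c0 = 1 := by
    rw [hc0def, hSdef, coeff_zero_eq_eval_zero]
    simp only [eval_pow, eval_add, eval_mul, eval_C, eval_X, mul_zero, zero_add]
    exact hpow β hβ
  have hcoeff : r.coeff (q - 1) = 0 := by
    rw [hrdef]
    rw [coeff_add, coeff_sub, coeff_C_mul, coeff_X_pow, if_pos rfl, mul_one, hStop,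
      coeff_C, if_neg (by omega), hc0]
    ring_nf
    exact h2
  constructor
  · rw [degree_lt_iff_coeff_zero]
    intro m hm
    rcases eq_or_lt_of_le hm with h | h
    · rw [← h]; exact hcoeff
    · exact (degree_lt_iff_coeff_zero r q).mp hdr m (by omega)
  · exact hcoeff
end

section
/- Let q = 2^ℓ. The number of pairs (a, b) with 0 ≤ a, b ≤ q − 1 such that the complement of the binary-digit set of a (within ℓ bits) is contained in the binary-digit set of b is exactly 3^ℓ. Consequently, the number of 'good' monomials X^a Y^b (those that restrict to degree < q−1 on all simple lines, including the special case a = b = q−1) is q² − 3^ℓ + 1. -/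
/-!
Reading `a < 2 ^ ℓ` as its set of binary digits `A ⊆ {0, …, ℓ - 1}`, the condition says exactly
that `A ∪ B = {0, …, ℓ - 1}`. For a fixed `A` the admissible `B` form the interval
`[Aᶜ, {0, …, ℓ - 1}]`, with `2 ^ #A` elements, and `∑_A 2 ^ #A = (2 + 1) ^ ℓ`.
-/

open Finset

theorem Finset.filter_powerset_union_eq_Icc {α : Type*} [DecidableEq α] {s t : Finset α}
    (ht : t ⊆ s) : {u ∈ s.powerset | t ∪ u = s} = Icc (s \ t) s := by
  ext u
  simp only [mem_filter, mem_powerset, mem_Icc]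
  constructor
  · rintro ⟨hu, rfl⟩
    exact ⟨by simp, hu⟩
  · rintro ⟨hsu, hu⟩
    refine ⟨hu, subset_antisymm (union_subset ht hu) fun x hx => ?_⟩
    by_cases hxt : x ∈ t
    · exact mem_union_left _ hxt
    · exact mem_union_right _ (hsu (mem_sdiff.2 ⟨hx, hxt⟩))

theorem Finset.card_filter_powerset_product_union_eq {α : Type*} [DecidableEq α]
    (s : Finset α) : #{p ∈ s.powerset ×ˢ s.powerset | p.1 ∪ p.2 = s} = 3 ^ #s := by
  have hfiber : ∀ t ∈ s.powerset, #{u ∈ s.powerset | t ∪ u = s} = 2 ^ #t := by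
    intro t ht
    have ht : t ⊆ s := mem_powerset.1 ht
    rw [filter_powerset_union_eq_Icc ht, card_Icc_finset sdiff_subset, card_sdiff_of_subset ht,
      Nat.sub_sub_self (card_le_card ht)]
  calc #{p ∈ s.powerset ×ˢ s.powerset | p.1 ∪ p.2 = s}
      = ∑ t ∈ s.powerset, #{u ∈ s.powerset | t ∪ u = s} := by
        simp only [card_filter, sum_product]
    _ = ∑ t ∈ s.powerset, 2 ^ #t * 1 ^ (#s - #t) := by
        simp only [one_pow, mul_one]
        exact sum_congr rfl hfiber
    _ = 3 ^ #s := sum_pow_mul_eq_add_pow 2 1 s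

theorem Nat.toFinset_bitIndices_subset_range_iff {n ℓ : ℕ} :
    n.bitIndices.toFinset ⊆ range ℓ ↔ n < 2 ^ ℓ := by
  constructor
  · intro h
    rw [← sum_toFinset_bitIndices_two_pow n]
    exact Nat.geomSum_lt le_rfl fun i hi => mem_range.1 (h hi)
  · intro h i hi
    have hi : n.testBit i := by simpa using hi
    exact mem_range.2 ((Nat.pow_lt_pow_iff_right (by norm_num)).1
      ((Nat.ge_two_pow_of_testBit hi).trans_lt h))

theorem Nat.card_filter_testBit_false_imp_true (ℓ : ℕ) :
    #{p ∈ range (2 ^ ℓ) ×ˢ range (2 ^ ℓ) |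
      ∀ i < ℓ, p.1.testBit i = false → p.2.testBit i = true} = 3 ^ ℓ := by
  conv_rhs => rw [← card_range ℓ, ← card_filter_powerset_product_union_eq]
  refine card_equiv (equivBitIndices.prodCongr equivBitIndices) fun ⟨a, b⟩ => ?_
  simp only [mem_filter, mem_product, mem_range, mem_powerset, Equiv.prodCongr_apply,
    Prod.map, equivBitIndices_apply, toFinset_bitIndices_subset_range_iff]
  refine and_congr_right fun ⟨ha, hb⟩ => ?_
  rw [← toFinset_bitIndices_subset_range_iff] at ha hb
  simp only [subset_antisymm_iff, union_subset ha hb, true_and, subset_iff, mem_union,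
    List.mem_toFinset, mem_bitIndices, mem_range]
  exact forall₂_congr fun i _ => by cases a.testBit i <;> simp

/-- Counting good monomials: the number of pairs `(a, b)` with `0 ≤ a, b ≤ q - 1`
such that the complement (within `ℓ` bits) of the binary-digit set of `a` is
contained in the binary-digit set of `b` is exactly `3^ℓ`.  Consequently, the
number of good monomials (those with `(a,b) = (q-1, q-1)` or failing this
containment) is `q² - 3^ℓ + 1`. -/
theorem count_good_monomials (ℓ q : ℕ) (hq : q = 2 ^ ℓ) :
    (((Finset.range q ×ˢ Finset.range q).filter
        (fun p => ∀ i < ℓ, p.1.testBit i = false → p.2.testBit i = true)).card = 3 ^ ℓ) ∧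
    (((Finset.range q ×ˢ Finset.range q).filter
        (fun p => p = (q - 1, q - 1) ∨
          ¬ (∀ i < ℓ, p.1.testBit i = false → p.2.testBit i = true))).card
      = q ^ 2 - 3 ^ ℓ + 1) := by
  subst hq
  have hcount := Nat.card_filter_testBit_false_imp_true ℓ
  refine ⟨hcount, ?_⟩
  have htop : (2 ^ ℓ - 1, 2 ^ ℓ - 1) ∈ range (2 ^ ℓ) ×ˢ range (2 ^ ℓ) := by simp
  have htop_not_bad : (2 ^ ℓ - 1, 2 ^ ℓ - 1) ∉ range (2 ^ ℓ) ×ˢ range (2 ^ ℓ) \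
      {p ∈ range (2 ^ ℓ) ×ˢ range (2 ^ ℓ) |
        ∀ i < ℓ, p.1.testBit i = false → p.2.testBit i = true} := by
    simp [Nat.testBit_two_pow_sub_one]
  rw [filter_or, filter_eq', if_pos htop, filter_not,
    card_union_of_disjoint (disjoint_singleton_left.2 htop_not_bad),
    card_sdiff_of_subset (filter_subset _ _), hcount, card_product, card_range, card_singleton,
    sq, add_comm]
end

section
/- Let q = 2^ℓ, let s and t divide q−1, and let G_s = {x ∈ F_q* : x^s = 1}, G_t = {x ∈ F_q* : x^t = 1}. Suppose P(X,Y) = X^{a₁}Y^{b₁} + X^{a₂}Y^{b₂} where neither monomial is good, a₁ ≡ a₂ (mod s), and a₁ + b₁ ≡ a₂ + b₂ (mod t). Then for every line L(T) = (T, αT + β) with α ∈ G_s and β ∈ G_t, the restriction P|_L has degree strictly less than q − 1. -/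
open Polynomial

namespace Shadow2

theorem div_two {n m : ℕ} (h : Shadow2 n m) : Shadow2 (n / 2) (m / 2) := fun i hi => by
  rw [Nat.testBit_div_two] at hi ⊢
  exact h (i + 1) hi

theorem choose_mod_two_mod_two_eq_one {n m : ℕ} (h : Shadow2 n m) : (m % 2).choose (n % 2) = 1 := by
  rcases Nat.mod_two_eq_zero_or_one n with hn | hn
  · rw [hn, Nat.choose_zero_right]
  · have hm := h 0 (Nat.mod_two_eq_one_iff_testBit_zero.mp hn)
    rw [hn, Nat.mod_two_eq_one_iff_testBit_zero.mpr hm, Nat.choose_self]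

theorem choose_mod_two_eq_one {n m : ℕ} (h : Shadow2 n m) : m.choose n % 2 = 1 := by
  induction m using Nat.strong_induction_on generalizing n with
  | _ m ih =>
    rcases Nat.eq_zero_or_pos m with rfl | hm
    · have hn : n = 0 := Nat.zero_of_testBit_eq_false fun i =>
        Bool.eq_false_iff.mpr fun hi => by simpa using h i hi
      rw [hn]; rfl
    · have lucas := Choose.choose_modEq_choose_mod_mul_choose_div_nat (n := m) (k := n) (p := 2)
      rw [h.choose_mod_two_mod_two_eq_one, one_mul] at lucas
      exact Eq.trans lucas (ih _ (by omega) h.div_two)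

theorem le {n m : ℕ} (h : Shadow2 n m) : n ≤ m :=
  le_of_not_gt fun hlt => by simpa [Nat.choose_eq_zero_of_lt hlt] using h.choose_mod_two_eq_one

end Shadow2

namespace FiniteField

open Finset

variable {K : Type*} [Field K] [Fintype K]

local notation "q" => Fintype.card K

theorem sum_pow_card_sub_one : ∑ x : K, x ^ (q - 1) = -1 := by
  classical
  rw [← add_sum_erase univ _ (mem_univ 0), zero_pow (by have := Fintype.one_lt_card (α := K); omega),
    zero_add, sum_congr rfl fun x hx => pow_card_sub_one_eq_one x (ne_of_mem_erase hx),
    sum_const, card_erase_of_mem (mem_univ 0), card_univ, nsmul_one,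
    Nat.cast_sub Fintype.card_pos, cast_card_eq_zero, Nat.cast_one, zero_sub]

theorem sum_pow_of_lt_two_mul {i : ℕ} (hi : i < 2 * (q - 1)) :
    ∑ x : K, x ^ i = if i = q - 1 then -1 else 0 := by
  split_ifs with h
  · rw [h, sum_pow_card_sub_one]
  rcases lt_or_gt_of_ne h with h | h
  · exact sum_pow_lt_card_sub_one K i h
  · have hpow : ∀ x : K, x ^ i = x ^ (i - (q - 1)) := fun x => by
      rw [show i = (i - q) + q by omega, pow_add, pow_card,
        show i - q + q - (q - 1) = i - q + 1 by omega, pow_succ]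
    simp_rw [hpow]
    exact sum_pow_lt_card_sub_one K _ (by omega)

theorem sum_eval_eq_neg_coeff {f : K[X]} (hf : f.natDegree < q) :
    ∑ x : K, f.eval x = -f.coeff (q - 1) := by
  have hq : 1 < q := Fintype.one_lt_card
  calc ∑ x : K, f.eval x = ∑ x : K, ∑ i ∈ range q, f.coeff i * x ^ i :=
        sum_congr rfl fun x _ => eval_eq_sum_range' hf x
    _ = ∑ i ∈ range q, f.coeff i * ∑ x : K, x ^ i := by
        rw [sum_comm]; simp_rw [mul_sum]
    _ = ∑ i ∈ range q, f.coeff i * if i = q - 1 then -1 else 0 :=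
        sum_congr rfl fun i hi => by
          rw [sum_pow_of_lt_two_mul (by rw [mem_range] at hi; omega)]
    _ = -f.coeff (q - 1) := by simp [mul_ite]

theorem monic_X_pow_card_sub_X : (X ^ q - X : K[X]).Monic :=
  monic_X_pow_sub (by rw [degree_X]; exact_mod_cast Fintype.one_lt_card)

theorem eval_modByMonic_X_pow_card_sub_X (p : K[X]) (x : K) :
    (p %ₘ (X ^ q - X)).eval x = p.eval x := by
  simp [modByMonic_eq_sub_mul_div p (X ^ q - X), pow_card]

theorem natDegree_modByMonic_X_pow_card_sub_X_lt (p : K[X]) :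
    (p %ₘ (X ^ q - X)).natDegree < q := by
  have hq : 1 < q := Fintype.one_lt_card
  have hne : (X ^ q - X : K[X]) ≠ 1 := ne_of_apply_ne natDegree <| by
    rw [X_pow_card_sub_X_natDegree_eq K hq, natDegree_one]; omega
  simpa [X_pow_card_sub_X_natDegree_eq K hq] using
    natDegree_modByMonic_lt p monic_X_pow_card_sub_X hne

theorem degree_modByMonic_X_pow_card_sub_X_lt_of_sum_eval_eq_zero {p : K[X]}
    (hp : ∑ x : K, p.eval x = 0) : (p %ₘ (X ^ q - X)).degree < ↑(q - 1) := by
  set r := p %ₘ (X ^ q - X)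
  have hr : r.natDegree < q := natDegree_modByMonic_X_pow_card_sub_X_lt p
  have hcoeff : r.coeff (q - 1) = 0 := by
    rw [← neg_eq_zero, ← sum_eval_eq_neg_coeff hr]
    simpa only [r, eval_modByMonic_X_pow_card_sub_X] using hp
  rw [degree_lt_iff_coeff_zero]
  intro m hm
  obtain h | h := (show q - 1 ≤ m by exact_mod_cast hm).eq_or_lt
  · rw [← h, hcoeff]
  · exact coeff_eq_zero_of_natDegree_lt (by omega)

theorem sum_pow_mul_add_pow {a b : ℕ} (ha : a ≤ q - 1) (hab : a + b < 2 * (q - 1)) (α β : K) :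
    ∑ x : K, x ^ a * (α * x + β) ^ b =
      -(b.choose (q - 1 - a) * α ^ (q - 1 - a) * β ^ (a + b - (q - 1))) := by
  set c : ℕ → K := fun j => b.choose j * α ^ j * β ^ (b - j)
  calc ∑ x : K, x ^ a * (α * x + β) ^ b
      = ∑ x : K, ∑ j ∈ range (b + 1), c j * x ^ (a + j) := by
        refine sum_congr rfl fun x _ => ?_
        rw [add_pow, mul_sum]
        refine sum_congr rfl fun j _ => ?_
        simp only [c]; ring
    _ = ∑ j ∈ range (b + 1), c j * ∑ x : K, x ^ (a + j) := by
        rw [sum_comm]; simp_rw [mul_sum]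
    _ = ∑ j ∈ range (b + 1), if j = q - 1 - a then -c j else 0 :=
        sum_congr rfl fun j hj => by
          rw [mem_range] at hj
          rw [sum_pow_of_lt_two_mul (by omega)]
          simp only [show a + j = q - 1 ↔ j = q - 1 - a by omega, mul_ite, mul_neg_one, mul_zero]
    _ = -(b.choose (q - 1 - a) * α ^ (q - 1 - a) * β ^ (a + b - (q - 1))) := by
        rw [sum_ite_eq']
        split_ifs with h <;> rw [mem_range] at h
        · simp only [c, show b - (q - 1 - a) = a + b - (q - 1) by omega]
        · rw [Nat.choose_eq_zero_of_lt (by omega)]; simp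

theorem sum_pow_mul_add_pow_of_shadow2 [CharP K 2] {a b : ℕ} (ha : a ≤ q - 1)
    (hab : a + b < 2 * (q - 1)) (hng : Shadow2 (q - 1 - a) b) (α β : K) :
    ∑ x : K, x ^ a * (α * x + β) ^ b = α ^ (q - 1 - a) * β ^ (a + b - (q - 1)) := by
  rw [sum_pow_mul_add_pow ha hab, CharP.cast_eq_mod K 2, hng.choose_mod_two_eq_one, Nat.cast_one, one_mul,
    CharTwo.neg_eq]

end FiniteField

theorem binomial_restricts_nicely_general (ℓ : ℕ) (F : Type*) [Field F] [Fintype F]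
    (hF : Fintype.card F = 2 ^ ℓ) (q : ℕ) (hq : q = 2 ^ ℓ)
    (s t : ℕ)
    (a₁ b₁ a₂ b₂ : ℕ)
    (ha₁ : a₁ ≤ q - 1) (hab₁ : a₁ + b₁ < 2 * (q - 1))
    (ha₂ : a₂ ≤ q - 1) (hab₂ : a₂ + b₂ < 2 * (q - 1))
    (hng₁ : Shadow2 (q - 1 - a₁) b₁) (hng₂ : Shadow2 (q - 1 - a₂) b₂)
    (hmod₁ : a₁ ≡ a₂ [MOD s]) (hmod₂ : a₁ + b₁ ≡ a₂ + b₂ [MOD t])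
    (α β : F) (hα : α ^ s = 1) (hβ : β ^ t = 1) :
    ((X ^ a₁ * (C α * X + C β) ^ b₁ + X ^ a₂ * (C α * X + C β) ^ b₂ : F[X])
        %ₘ (X ^ q - X)).degree < ((q - 1 : ℕ) : WithBot ℕ) := by
  obtain rfl : q = Fintype.card F := hq.trans hF.symm
  have : CharP F 2 := charP_of_card_eq_prime_pow hF
  apply FiniteField.degree_modByMonic_X_pow_card_sub_X_lt_of_sum_eval_eq_zero
  have hα' : α ^ (Fintype.card F - 1 - a₁) = α ^ (Fintype.card F - 1 - a₂) :=
    pow_eq_pow_of_modEq (Nat.ModEq.sub_left ha₁ ha₂ hmod₁) hα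
  have hβ' : β ^ (a₁ + b₁ - (Fintype.card F - 1)) = β ^ (a₂ + b₂ - (Fintype.card F - 1)) := by
    obtain ⟨h₁, h₂⟩ := And.intro hng₁.le hng₂.le
    exact pow_eq_pow_of_modEq (Nat.ModEq.sub_right (by omega) (by omega) hmod₂) hβ
  simp only [eval_add, eval_mul, eval_pow, eval_X, eval_C, Finset.sum_add_distrib]
  rw [FiniteField.sum_pow_mul_add_pow_of_shadow2 ha₁ hab₁ hng₁,
    FiniteField.sum_pow_mul_add_pow_of_shadow2 ha₂ hab₂ hng₂, hα', hβ', CharTwo.add_self_eq_zero]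

/-- If neither monomial of `X^{a₁}Y^{b₁} + X^{a₂}Y^{b₂}` is good,
`a₁ ≡ a₂ (mod s)` and `a₁ + b₁ ≡ a₂ + b₂ (mod t)`, then for every line
`L(T) = (T, αT + β)` with `α ∈ G_s` and `β ∈ G_t` the restriction of the
binomial to `L` has degree strictly less than `q - 1`. -/
theorem binomial_restricts_nicely (ℓ : ℕ) (F : Type*) [Field F] [Fintype F]
    (hF : Fintype.card F = 2 ^ ℓ) (q : ℕ) (hq : q = 2 ^ ℓ)
    (s t : ℕ) (hs : s ∣ q - 1) (ht : t ∣ q - 1)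
    (a₁ b₁ a₂ b₂ : ℕ)
    (ha₁ : a₁ ≤ q - 1) (hb₁ : b₁ ≤ q - 1) (hab₁ : a₁ + b₁ < 2 * (q - 1))
    (ha₂ : a₂ ≤ q - 1) (hb₂ : b₂ ≤ q - 1) (hab₂ : a₂ + b₂ < 2 * (q - 1))
    (hng₁ : Shadow2 (q - 1 - a₁) b₁) (hng₂ : Shadow2 (q - 1 - a₂) b₂)
    (hmod₁ : a₁ ≡ a₂ [MOD s]) (hmod₂ : a₁ + b₁ ≡ a₂ + b₂ [MOD t])
    (α β : F) (hα : α ^ s = 1) (hβ : β ^ t = 1) :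
    ((X ^ a₁ * (C α * X + C β) ^ b₁ + X ^ a₂ * (C α * X + C β) ^ b₂ : F[X])
        %ₘ (X ^ q - X)).degree < ((q - 1 : ℕ) : WithBot ℕ) :=
  binomial_restricts_nicely_general ℓ F hF q hq s t a₁ b₁ a₂ b₂ ha₁ hab₁ ha₂ hab₂ hng₁ hng₂ hmod₁
    hmod₂ α β hα hβ
end

section
/- Let q = 2^ℓ with s | q−1, and let G_s ≤ F_q* be the multiplicative subgroup of order s. For every point (x, y) ∈ F_q² \ {(0,0)}, there exist at least s − 1 pairwise non-equivalent simple lines of the form L(T) = (T, αT + β) with α ∈ G_s, β ≠ 0, passing through (x, y). Moreover, no such line passes through the origin. -/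
/-!
Since `F_qˣ` is cyclic, `s ∣ q - 1` gives exactly `s` roots of `α ^ s = 1`. The line of slope `α`
through `(x, y)` has intercept `y - α x`, which vanishes for at most one `α` because
`(x, y) ≠ (0, 0)`. A simple line is determined by its points at `T = 0` and `T = 1`.
-/

open Finset Polynomial

theorem IsCyclic.exists_orderOf_eq_of_dvd_natCard {G : Type*} [Group G] [Finite G] [IsCyclic G]
    {d : ℕ} (hd : d ∣ Nat.card G) : ∃ g : G, orderOf g = d := by
  obtain ⟨g, hg⟩ := IsCyclic.exists_ofOrder_eq_natCard (α := G)
  exact ⟨g ^ (orderOf g / d), orderOf_pow_orderOf_div (hg ▸ Nat.card_pos.ne') (hg ▸ hd)⟩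

theorem FiniteField.exists_isPrimitiveRoot_of_dvd {F : Type*} [Field F] [Fintype F] {s : ℕ}
    (hs : s ∣ Fintype.card F - 1) : ∃ ζ : F, IsPrimitiveRoot ζ s := by
  classical
  rw [← Fintype.card_units, ← Nat.card_eq_fintype_card] at hs
  obtain ⟨g, hg⟩ := IsCyclic.exists_orderOf_eq_of_dvd_natCard hs
  exact ⟨g, IsPrimitiveRoot.coe_units_iff.2 (hg ▸ IsPrimitiveRoot.orderOf g)⟩

theorem FiniteField.card_nthRootsFinset_one_of_dvd {F : Type*} [Field F] [Fintype F] {s : ℕ}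
    (hs : s ∣ Fintype.card F - 1) : #(nthRootsFinset s (1 : F)) = s :=
  (exists_isPrimitiveRoot_of_dvd hs).choose_spec.card_nthRootsFinset

theorem card_sub_one_le_card_filter_mul_ne {F : Type*} [Field F] [DecidableEq F] {x y : F}
    (hxy : (x, y) ≠ (0, 0)) (R : Finset F) : #R - 1 ≤ #(R.filter fun a => a * x ≠ y) := by
  have hsolutions : #(R.filter fun a => ¬a * x ≠ y) ≤ 1 := by
    refine card_le_one.2 fun a ha b hb => ?_
    simp only [mem_filter, not_not] at ha hb
    have hx : x ≠ 0 := by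
      rintro rfl
      exact hxy (by rw [← ha.2, mul_zero])
    exact mul_right_cancel₀ hx (ha.2.trans hb.2.symm)
  have := card_filter_add_card_filter_not (s := R) fun a => a * x ≠ y
  omega

section SimpleLine

variable {R : Type*}

def simpleLine [Semiring R] (p : R × R) (T : R) : R × R := (T, p.1 * T + p.2)

theorem mem_range_simpleLine [Semiring R] {p : R × R} {x y : R} :
    (x, y) ∈ Set.range (simpleLine p) ↔ p.1 * x + p.2 = y := by
  simp [simpleLine]

theorem zero_notMem_range_simpleLine [Semiring R] {p : R × R} (hp : p.2 ≠ 0) :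
    (0, 0) ∉ Set.range (simpleLine p) :=
  fun h => hp (by simpa using mem_range_simpleLine.1 h)

theorem range_simpleLine_inj [Ring R] {p p' : R × R} :
    Set.range (simpleLine p) = Set.range (simpleLine p') ↔ p = p' := by
  refine ⟨fun h => ?_, fun h => h ▸ rfl⟩
  have h0 := mem_range_simpleLine.1 (h ▸ Set.mem_range_self (f := simpleLine p) 0)
  have h1 := mem_range_simpleLine.1 (h ▸ Set.mem_range_self (f := simpleLine p) 1)
  simp only [mul_zero, zero_add, mul_one] at h0 h1
  rw [h0] at h1
  exact Prod.ext (add_right_cancel h1).symm h0.symm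

end SimpleLine

/-- Through every nonzero point of `F_q²` pass at least `s - 1` pairwise
non-equivalent simple lines `L(T) = (T, αT + β)` with `α ∈ G_s` (the subgroup
of `s`-th roots of unity) and `β ≠ 0`; and no such line passes through the
origin. -/
theorem lines_through_points (ℓ : ℕ) (F : Type*) [Field F] [Fintype F]
    (hF : Fintype.card F = 2 ^ ℓ) (s : ℕ) (hs : s ∣ 2 ^ ℓ - 1) :
    (∀ x y : F, (x, y) ≠ (0, 0) →
      ∃ S : Finset (F × F), s - 1 ≤ S.card ∧
        (∀ p ∈ S, p.1 ^ s = 1 ∧ p.2 ≠ 0 ∧ p.1 * x + p.2 = y) ∧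
        (∀ p ∈ S, ∀ p' ∈ S, p ≠ p' →
          Set.range (fun T : F => (T, p.1 * T + p.2)) ≠
            Set.range (fun T : F => (T, p'.1 * T + p'.2)))) ∧
    (∀ α β : F, α ^ s = 1 → β ≠ 0 →
      ((0 : F), (0 : F)) ∉ Set.range (fun T : F => (T, α * T + β))) := by
  classical
  rw [← hF] at hs
  have hs0 : 0 < s := Nat.pos_of_dvd_of_pos hs (Nat.sub_pos_of_lt Fintype.one_lt_card)
  refine ⟨fun x y hxy => ?_, fun α β _ hβ => zero_notMem_range_simpleLine (p := (α, β)) hβ⟩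
  set slopes := (nthRootsFinset s (1 : F)).filter fun a => a * x ≠ y
  refine ⟨slopes.image fun a => (a, y - a * x), ?_, ?_, ?_⟩
  · rw [card_image_of_injective _ fun a b h => (Prod.ext_iff.1 h).1]
    calc s - 1 = #(nthRootsFinset s (1 : F)) - 1 := by
          rw [FiniteField.card_nthRootsFinset_one_of_dvd hs]
      _ ≤ #slopes := card_sub_one_le_card_filter_mul_ne hxy _
  · simp only [mem_image, forall_exists_index, and_imp]
    rintro _ a ha rfl
    obtain ⟨hroot, hne⟩ := mem_filter.1 ha
    exact ⟨(mem_nthRootsFinset hs0 1).1 hroot, sub_ne_zero.2 hne.symm, by ring⟩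
  · exact fun p _ p' _ hne h => hne ((range_simpleLine_inj (p := p) (p' := p')).1 h)
end

section
/- Let q = 2^ℓ, fix s, t dividing q−1, and fix residues i ∈ [s], j ∈ [t]. The number of pairs (a, b) with 0 ≤ a, b ≤ q−1 such that a ≡ i (mod s), a + b ≡ j (mod t), and the complement of the binary-digit set of a is contained in the binary-digit set of b, equals |E_{i,j}| where E_{i,j} = {(m, n) ∈ [q]² : m ≡ i (mod s), n ≡ j (mod t), n ≤₂ m}. -/
open scoped Classical

/-!
Write `a' = 2 ^ ℓ - 1 - a` for the ℓ-bit complement of `a`. The condition on `(a, b)` says that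
the bits of `a'` are among those of `b`, so `b = c + a'` with `c = a &&& b`, a disjoint sum of
bit sets; conversely every `c ≤₂ a` gives such a `b = c + a'`. Since `a + b = c + (2 ^ ℓ - 1)`
and `t ∣ 2 ^ ℓ - 1`, the congruence on `a + b` modulo `t` becomes the congruence on `c`.
-/

namespace Nat

theorem add_eq_or_of_and_eq_zero {x y : ℕ} (h : x &&& y = 0) : x + y = x ||| y := by
  have small : ∀ n ≤ x + y, n < 2 ^ (x + y) := fun n hn => hn.trans_lt Nat.lt_two_pow_self
  have hx := small x (by omega)
  have hy := small y (by omega)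
  have := congrArg BitVec.toNat <| BitVec.add_eq_or_of_and_eq_zero
    (BitVec.ofNat (x + y) x) (BitVec.ofNat (x + y) y) (by
      apply BitVec.eq_of_toNat_eq
      simp [Nat.mod_eq_of_lt hx, Nat.mod_eq_of_lt hy, h])
  simpa [Nat.mod_eq_of_lt hx, Nat.mod_eq_of_lt hy, Nat.mod_eq_of_lt (small _ le_rfl)] using this

theorem testBit_eq_false_of_lt_two_pow {x n k : ℕ} (hx : x < 2 ^ n) (hk : n ≤ k) :
    x.testBit k = false :=
  testBit_lt_two_pow (hx.trans_le (Nat.pow_le_pow_right two_pos hk))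

end Nat

section Complement

variable {ℓ a : ℕ}

theorem testBit_two_pow_sub_one_sub (ha : a < 2 ^ ℓ) (k : ℕ) :
    (2 ^ ℓ - 1 - a).testBit k = (decide (k < ℓ) && !a.testBit k) := by
  rw [Nat.sub_sub, Nat.add_comm, Nat.testBit_two_pow_sub_succ ha]

theorem testBit_add_two_pow_sub_one_sub (ha : a < 2 ^ ℓ) {c : ℕ}
    (hca : ∀ k, c.testBit k = true → a.testBit k = true) (k : ℕ) :
    (c + (2 ^ ℓ - 1 - a)).testBit k = (c.testBit k || (decide (k < ℓ) && !a.testBit k)) := by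
  have disjoint : c &&& (2 ^ ℓ - 1 - a) = 0 := Nat.eq_of_testBit_eq fun n => by
    rw [Nat.testBit_and, testBit_two_pow_sub_one_sub ha]
    cases h : c.testBit n
    · simp
    · simp [hca n h]
  rw [Nat.add_eq_or_of_and_eq_zero disjoint, Nat.testBit_or, testBit_two_pow_sub_one_sub ha]

theorem and_add_two_pow_sub_one_sub (ha : a < 2 ^ ℓ) {b : ℕ} (hb : b < 2 ^ ℓ)
    (hab : ∀ k < ℓ, a.testBit k = false → b.testBit k = true) :
    (a &&& b) + (2 ^ ℓ - 1 - a) = b := Nat.eq_of_testBit_eq fun k => by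
  rw [testBit_add_two_pow_sub_one_sub ha (fun k h => by simp_all [Nat.testBit_and]),
    Nat.testBit_and]
  by_cases hk : k < ℓ
  · cases h : a.testBit k
    · simp [hk, hab k hk h]
    · simp
  · simp [hk, Nat.testBit_eq_false_of_lt_two_pow hb (not_lt.mp hk)]

theorem and_add_two_pow_sub_one_sub_cancel (ha : a < 2 ^ ℓ) {c : ℕ}
    (hca : ∀ k, c.testBit k = true → a.testBit k = true) :
    a &&& (c + (2 ^ ℓ - 1 - a)) = c := Nat.eq_of_testBit_eq fun k => by
  rw [Nat.testBit_and, testBit_add_two_pow_sub_one_sub ha hca]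
  cases h : c.testBit k
  · cases a.testBit k <;> simp
  · simp [hca k h]

theorem add_two_pow_sub_one_sub_lt (ha : a < 2 ^ ℓ) {c : ℕ}
    (hca : ∀ k, c.testBit k = true → a.testBit k = true) :
    c + (2 ^ ℓ - 1 - a) < 2 ^ ℓ := Nat.lt_pow_two_of_testBit _ fun k hk => by
  have := Nat.testBit_eq_false_of_lt_two_pow ha hk
  rw [testBit_add_two_pow_sub_one_sub ha hca]
  cases h : c.testBit k
  · simp [this, hk]
  · simp_all

theorem testBit_add_two_pow_sub_one_sub_of_testBit_eq_false (ha : a < 2 ^ ℓ) {c : ℕ}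
    (hca : ∀ k, c.testBit k = true → a.testBit k = true) {k : ℕ} (hk : k < ℓ)
    (hak : a.testBit k = false) : (c + (2 ^ ℓ - 1 - a)).testBit k = true := by
  simp [testBit_add_two_pow_sub_one_sub ha hca, hk, hak]

end Complement

theorem count_not_good_in_class_general (ℓ q s t i j : ℕ) (hq : q = 2 ^ ℓ)
    (ht : t ∣ q - 1) :
    ((Finset.range q ×ˢ Finset.range q).filter
        (fun p => p.1 % s = i ∧ (p.1 + p.2) % t = j ∧
          ∀ k < ℓ, p.1.testBit k = false → p.2.testBit k = true)).card
      = ((Finset.range q ×ˢ Finset.range q).filter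
        (fun p => p.1 % s = i ∧ p.2 % t = j ∧
          ∀ k, p.2.testBit k = true → p.1.testBit k = true)).card := by
  subst hq
  have mod_add_two_pow_sub_one (c : ℕ) : (c + (2 ^ ℓ - 1)) % t = c % t := by
    obtain ⟨u, hu⟩ := ht
    rw [hu, Nat.add_mul_mod_self_left]
  apply Finset.card_nbij' (fun p => (p.1, p.1 &&& p.2)) (fun p => (p.1, p.2 + (2 ^ ℓ - 1 - p.1)))
  all_goals
    rintro ⟨a, x⟩ h
    simp only [Finset.mem_coe, Finset.mem_filter, Finset.mem_product, Finset.mem_range] at h ⊢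
  · obtain ⟨⟨ha, hb⟩, hai, habj, hbits⟩ := h
    have : a + x = (a &&& x) + (2 ^ ℓ - 1) := by
      have := and_add_two_pow_sub_one_sub ha hb hbits
      omega
    refine ⟨⟨ha, Nat.and_le_left.trans_lt ha⟩, hai, ?_, fun k hk => ?_⟩
    · rw [← habj, this, mod_add_two_pow_sub_one]
    · rw [Nat.testBit_and, Bool.and_eq_true] at hk
      exact hk.1
  · obtain ⟨⟨ha, -⟩, hai, hcj, hca⟩ := h
    have : a + (x + (2 ^ ℓ - 1 - a)) = x + (2 ^ ℓ - 1) := by omega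
    refine ⟨⟨ha, add_two_pow_sub_one_sub_lt ha hca⟩, hai, ?_,
      fun k hk => testBit_add_two_pow_sub_one_sub_of_testBit_eq_false ha hca hk⟩
    rw [← hcj, this, mod_add_two_pow_sub_one]
  · simp [and_add_two_pow_sub_one_sub h.1.1 h.1.2 h.2.2.2]
  · simp [and_add_two_pow_sub_one_sub_cancel h.1.1 h.2.2.2]

/-- The number of pairs `(a, b) ∈ [q]²` with `a ≡ i (mod s)`,
`a + b ≡ j (mod t)`, and the complement (within `ℓ` bits) of the binary-digit
set of `a` contained in the binary-digit set of `b`, equals `|E_{i,j}|`, where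
`E_{i,j}` is the set of pairs `(m, n) ∈ [q]²` with `m ≡ i (mod s)`,
`n ≡ j (mod t)` and `n ≤₂ m`. -/
theorem count_not_good_in_class (ℓ q s t i j : ℕ) (hq : q = 2 ^ ℓ)
    (hs : s ∣ q - 1) (ht : t ∣ q - 1) (hi : i < s) (hj : j < t) :
    ((Finset.range q ×ˢ Finset.range q).filter
        (fun p => p.1 % s = i ∧ (p.1 + p.2) % t = j ∧
          ∀ k < ℓ, p.1.testBit k = false → p.2.testBit k = true)).card
      = ((Finset.range q ×ˢ Finset.range q).filter
        (fun p => p.1 % s = i ∧ p.2 % t = j ∧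
          ∀ k, p.2.testBit k = true → p.1.testBit k = true)).card :=
  count_not_good_in_class_general ℓ q s t i j hq ht
end

section
/- Let q = 2^ℓ and s | q−1. There exists a linear code over F_q of length N = q² − 1 and dimension at least N + 1 − s(√(N+1) − 1) that has the (s−1)-disjoint-repair-group property: every coordinate has s−1 pairwise disjoint repair groups. -/
lemma drgp_arith (q s : ℕ) (hq : 2 ≤ q) (h1 : 1 ≤ s) (h2 : s ≤ q - 1) :
    q ^ 2 - s * (q - 1) ≤ (q ^ 2 - 1) - (s - 1) * q := by
  obtain ⟨q', rfl⟩ := Nat.exists_eq_add_of_le hq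
  obtain ⟨s', rfl⟩ := Nat.exists_eq_add_of_le h1
  have h3 : s' ≤ q' := by omega
  rw [Nat.sub_sub]
  apply Nat.sub_le_sub_left
  have e1 : (1 + s') * (2 + q' - 1) = 1 + q' + s' + s' * q' := by
    have h4 : 2 + q' - 1 = 1 + q' := by omega
    rw [h4]; ring
  have e2 : (1 + s' - 1) * (2 + q') = 2 * s' + s' * q' := by
    have h4 : 1 + s' - 1 = s' := by omega
    rw [h4]; ring
  rw [e1, e2]
  linarith

/-- For `q = 2^ℓ`, `s ∣ q - 1` and `N = q² - 1`, there is a linear code over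
`F_q` of length `N` and dimension at least `N + 1 - s(√(N+1) - 1) = q² - s(q-1)`
with the `(s-1)`-disjoint-repair-group property. -/
theorem code_with_drgp (ℓ : ℕ) (F : Type*) [Field F] [Fintype F]
    (hF : Fintype.card F = 2 ^ ℓ) (q s : ℕ) (hq : q = 2 ^ ℓ) (hs : s ∣ q - 1) :
    ∃ Code : Submodule F (Fin (q ^ 2 - 1) → F),
      q ^ 2 - s * (q - 1) ≤ Module.finrank F Code ∧
      ∀ i : Fin (q ^ 2 - 1), ∃ R : Fin (s - 1) → Finset (Fin (q ^ 2 - 1)),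
        (∀ j k, j ≠ k → Disjoint (R j) (R k)) ∧
        ∀ j, i ∉ R j ∧
          ∀ c ∈ Code, ∀ c' ∈ Code, (∀ x ∈ R j, c x = c' x) → c i = c' i := by
  classical
  have hq2 : 2 ≤ q := by rw [hq, ← hF]; exact Fintype.one_lt_card
  have hs1 : 1 ≤ s := Nat.pos_of_dvd_of_pos hs (by omega)
  have hsq : s ≤ q - 1 := Nat.le_of_dvd (by omega) hs
  have hcardF : Fintype.card F = q := by rw [hF, hq]
  have hP : Fintype.card {v : F × F // v ≠ 0} = q ^ 2 - 1 := by
    rw [Fintype.card_subtype_compl, Fintype.card_subtype_eq, Fintype.card_prod, hcardF]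
    ring_nf
  obtain ⟨e⟩ : Nonempty (Fin (q ^ 2 - 1) ≃ {v : F × F // v ≠ 0}) :=
    ⟨(Fintype.equivFinOfCardEq hP).symm⟩
  obtain ⟨A⟩ : Nonempty (Fin (s - 1) ↪ F) := by
    apply Function.Embedding.nonempty_of_card_le
    rw [Fintype.card_fin, hcardF]; omega
  set f : (Fin (q ^ 2 - 1) → F) → Fin (s - 1) → F → F → F :=
    fun c t b x => if h : ((x, A t * x + b) : F × F) ≠ 0 then c (e.symm ⟨_, h⟩) else 0 with hf
  have Φadd : ∀ (c c' : Fin (q ^ 2 - 1) → F) (t : Fin (s - 1)) (b : F),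
      (∑ x : F, f (c + c') t b x) = (∑ x : F, f c t b x) + (∑ x : F, f c' t b x) := by
    intro c c' t b
    rw [← Finset.sum_add_distrib]
    refine Finset.sum_congr rfl fun x _ => ?_
    simp only [hf]
    split <;> simp
  have Φsmul : ∀ (a : F) (c : Fin (q ^ 2 - 1) → F) (t : Fin (s - 1)) (b : F),
      (∑ x : F, f (a • c) t b x) = a * ∑ x : F, f c t b x := by
    intro a c t b
    rw [Finset.mul_sum]
    refine Finset.sum_congr rfl fun x _ => ?_
    simp only [hf]
    split <;> simp
  set Φ : (Fin (q ^ 2 - 1) → F) →ₗ[F] (Fin (s - 1) × F → F) :=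
    { toFun := fun c tb => ∑ x : F, f c tb.1 tb.2 x
      map_add' := fun c c' => funext fun tb => Φadd c c' tb.1 tb.2
      map_smul' := fun a c => funext fun tb => Φsmul a c tb.1 tb.2 } with hΦ
  refine ⟨LinearMap.ker Φ, ?_, ?_⟩
  · have hrn := LinearMap.finrank_range_add_finrank_ker Φ
    rw [Module.finrank_pi, Fintype.card_fin] at hrn
    have hr : Module.finrank F (LinearMap.range Φ) ≤ (s - 1) * q := by
      calc Module.finrank F (LinearMap.range Φ)
          ≤ Module.finrank F (Fin (s - 1) × F → F) := Submodule.finrank_le _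
        _ = (s - 1) * q := by
            rw [Module.finrank_pi, Fintype.card_prod, Fintype.card_fin, hcardF]
    have harith := drgp_arith q s hq2 hs1 hsq
    have hk : q ^ 2 - 1 - Module.finrank F (LinearMap.range Φ)
        = Module.finrank F (LinearMap.ker Φ) := (Nat.eq_sub_of_add_eq' hrn).symm
    calc q ^ 2 - s * (q - 1) ≤ q ^ 2 - 1 - (s - 1) * q := harith
      _ ≤ q ^ 2 - 1 - Module.finrank F (LinearMap.range Φ) := Nat.sub_le_sub_left hr _
      _ = Module.finrank F (LinearMap.ker Φ) := hk
  · intro i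
    set P : F × F := (e i : F × F) with hPdef
    refine ⟨fun t => Finset.univ.filter (fun k => k ≠ i ∧
        ((e k : F × F)).2 = A t * ((e k : F × F)).1 + (P.2 - A t * P.1)), ?_, ?_⟩
    · intro t t' htt'
      rw [Finset.disjoint_left]
      intro k hk hk'
      simp only [Finset.mem_filter, Finset.mem_univ, true_and] at hk hk'
      obtain ⟨hki, hkt⟩ := hk
      obtain ⟨-, hkt'⟩ := hk'
      apply hki
      have hAne : A t - A t' ≠ 0 := sub_ne_zero.mpr (fun h => htt' (A.injective h))
      have h1 : (A t - A t') * ((e k : F × F).1 - P.1) = 0 := by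
        linear_combination hkt' - hkt
      have hx : (e k : F × F).1 = P.1 := by
        rcases mul_eq_zero.mp h1 with h | h
        · exact absurd h hAne
        · exact sub_eq_zero.mp h
      have hy : (e k : F × F).2 = P.2 := by
        rw [hkt, hx]; ring
      have : e k = e i := Subtype.ext (Prod.ext hx hy)
      exact e.injective this
    · intro t
      set b : F := P.2 - A t * P.1 with hb
      constructor
      · simp
      · intro c hc c' hc' hagree
        have h0 : (∑ x : F, f c t b x) = 0 := congrFun (LinearMap.mem_ker.mp hc) (t, b)
        have h0' : (∑ x : F, f c' t b x) = 0 := congrFun (LinearMap.mem_ker.mp hc') (t, b)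
        have hpt : ((P.1, A t * P.1 + b) : F × F) = P := by
          rw [hb]; exact Prod.ext rfl (by ring)
        have hterm : ∀ d : Fin (q ^ 2 - 1) → F, f d t b P.1 = d i := by
          intro d
          have hne : ((P.1, A t * P.1 + b) : F × F) ≠ 0 := by
            rw [hpt, hPdef]; exact (e i).2
          simp only [hf]
          rw [dif_pos hne]
          rw [show (⟨(P.1, A t * P.1 + b), hne⟩ : {v : F × F // v ≠ 0}) = e i from
            Subtype.ext hpt, Equiv.symm_apply_apply]
        have hrest : ∀ x ∈ Finset.univ.erase P.1, f c t b x = f c' t b x := by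
          intro x hx
          have hxP : x ≠ P.1 := (Finset.mem_erase.mp hx).1
          simp only [hf]
          split
          · rename_i h
            apply hagree
            simp only [Finset.mem_filter, Finset.mem_univ, true_and]
            refine ⟨?_, ?_⟩
            · intro hki
              apply hxP
              have h2 : ((x, A t * x + b) : F × F) = P := by
                have h3 := congrArg (fun z => (e z : F × F)) hki
                simpa [hPdef] using h3
              exact congrArg Prod.fst h2
            · rw [Equiv.apply_symm_apply, ← hb]
          · rfl
        have hsum : ∀ d : Fin (q ^ 2 - 1) → F,
            (∑ x : F, f d t b x) = f d t b P.1 + ∑ x ∈ Finset.univ.erase P.1, f d t b x :=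
          fun d => (Finset.add_sum_erase _ _ (Finset.mem_univ _)).symm
        have hS : (∑ x ∈ Finset.univ.erase P.1, f c t b x)
            = ∑ x ∈ Finset.univ.erase P.1, f c' t b x := Finset.sum_congr rfl hrest
        have h1 : f c t b P.1 + ∑ x ∈ Finset.univ.erase P.1, f c t b x
            = f c' t b P.1 + ∑ x ∈ Finset.univ.erase P.1, f c' t b x := by
          rw [← hsum c, ← hsum c', h0, h0']
        rw [hS] at h1
        have h2 := add_right_cancel h1
        rwa [hterm c, hterm c'] at h2
end

section
/- Define sets of valid triples of length r: a triple (y, c₀, c₁) ∈ [2^r]³ is valid if there exist a₀, a₁ ∈ [2^r] with a₀ ≥₂ c₀, a₁ ≥₂ c₁, and a₀ + a₁ ≡ y (mod 2^r). Partition valid triples into noCarry(r) (every witness has a₀ + a₁ ≤ 2^r − 1), yesCarry(r) (every witness has a₀ + a₁ > 2^r − 1), and maybeCarry(r) (witnesses of both kinds exist). Then |noCarry(r+1)| = 3·|noCarry(r)|. -/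
/-!
A triple lies in `noCarry r` exactly when `y = 2 ^ r - 1` and `c₀, c₁` have disjoint bits.
If a witness has `a₀ + a₁ < 2 ^ r - 1`, the bits of `a₀` and `a₁` can be enlarged so that their
sum grows by exactly `2 ^ r`, which gives a witness with a carry. If `a₀ + a₁ = 2 ^ r - 1` then
`a₁` is the bitwise complement of `a₀`, so `c₀ ≤₂ a₀` and `c₁ ≤₂ a₁` are disjoint; conversely
`(c₀, 2 ^ r - 1 - c₀)` is a witness, and every witness of `y = 2 ^ r - 1` has sum `2 ^ r - 1`.
Splitting off the lowest bits, disjoint pairs in `[2^r]²` number `3 ^ r`.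
-/

open scoped Classical

/-- `(a₀, a₁)` is a witness for the validity of the triple `(y, c₀, c₁)` of
length `r`: `a₀, a₁ ∈ [2^r]`, `a₀ ≥₂ c₀`, `a₁ ≥₂ c₁`, and
`a₀ + a₁ ≡ y (mod 2^r)`. -/
def IsWitness (r y c₀ c₁ a₀ a₁ : ℕ) : Prop :=
  a₀ < 2 ^ r ∧ a₁ < 2 ^ r ∧ Shadow2 c₀ a₀ ∧ Shadow2 c₁ a₁ ∧ (a₀ + a₁) % 2 ^ r = y

/-- All triples `(y, c₀, c₁) ∈ [2^r]³`. -/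
def triples (r : ℕ) : Finset (ℕ × ℕ × ℕ) :=
  Finset.range (2 ^ r) ×ˢ Finset.range (2 ^ r) ×ˢ Finset.range (2 ^ r)

/-- Valid triples all of whose witnesses have `a₀ + a₁ ≤ 2^r - 1`. -/
noncomputable def noCarry (r : ℕ) : Finset (ℕ × ℕ × ℕ) :=
  (triples r).filter (fun v =>
    (∃ a₀ a₁, IsWitness r v.1 v.2.1 v.2.2 a₀ a₁) ∧
    ∀ a₀ a₁, IsWitness r v.1 v.2.1 v.2.2 a₀ a₁ → a₀ + a₁ ≤ 2 ^ r - 1)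

/-- Valid triples all of whose witnesses have `a₀ + a₁ > 2^r - 1`. -/
noncomputable def yesCarry (r : ℕ) : Finset (ℕ × ℕ × ℕ) :=
  (triples r).filter (fun v =>
    (∃ a₀ a₁, IsWitness r v.1 v.2.1 v.2.2 a₀ a₁) ∧
    ∀ a₀ a₁, IsWitness r v.1 v.2.1 v.2.2 a₀ a₁ → 2 ^ r - 1 < a₀ + a₁)

/-- Valid triples admitting witnesses of both kinds. -/
noncomputable def maybeCarry (r : ℕ) : Finset (ℕ × ℕ × ℕ) :=
  (triples r).filter (fun v =>
    (∃ a₀ a₁, IsWitness r v.1 v.2.1 v.2.2 a₀ a₁ ∧ a₀ + a₁ ≤ 2 ^ r - 1) ∧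
    (∃ a₀ a₁, IsWitness r v.1 v.2.1 v.2.2 a₀ a₁ ∧ 2 ^ r - 1 < a₀ + a₁))

namespace Shadow2

theorem refl (n : ℕ) : Shadow2 n n := fun _ h => h

theorem trans {k n m : ℕ} (h₁ : Shadow2 k n) (h₂ : Shadow2 n m) : Shadow2 k m :=
  fun i h => h₂ i (h₁ i h)

theorem or_mono_left {n m : ℕ} (h : Shadow2 n m) (k : ℕ) : Shadow2 (k ||| n) (k ||| m) := by
  intro i hi
  simp only [Nat.testBit_or, Bool.or_eq_true] at hi ⊢
  exact hi.imp_right (h i)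

theorem or_of_right {n m : ℕ} (h : Shadow2 n m) (k : ℕ) : Shadow2 n (k ||| m) := by
  intro i hi
  simp [Nat.testBit_or, h i hi]

end Shadow2

theorem two_pow_add_eq_two_pow_or {r x : ℕ} (hx : x < 2 ^ r) : 2 ^ r + x = 2 ^ r ||| x := by
  simpa using Nat.two_pow_add_eq_or_of_lt hx 1

theorem exists_shadow2_add_eq_add_two_pow (r : ℕ) {a₀ a₁ : ℕ} (h₀ : a₀ < 2 ^ r)
    (h₁ : a₁ < 2 ^ r) (h : a₀ + a₁ + 1 < 2 ^ r) :
    ∃ b₀ b₁, b₀ < 2 ^ r ∧ b₁ < 2 ^ r ∧ Shadow2 a₀ b₀ ∧ Shadow2 a₁ b₁ ∧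
      b₀ + b₁ = a₀ + a₁ + 2 ^ r := by
  -- Split on the top bits of `a₀, a₁`; if neither is set and `a₀ + a₁ + 1 ≥ 2 ^ r`,
  -- setting both top bits adds exactly `2 ^ (r + 1)`.
  induction r generalizing a₀ a₁ with
  | zero => omega
  | succ r ih =>
    rw [pow_succ] at *
    wlog h₁' : a₁ < 2 ^ r generalizing a₀ a₁
    · obtain ⟨b₁, b₀, hb₁, hb₀, hs₁, hs₀, hsum⟩ := this h₁ h₀ (by omega) (by omega)
      exact ⟨b₀, b₁, hb₀, hb₁, hs₀, hs₁, by omega⟩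
    by_cases h₀' : a₀ < 2 ^ r
    · by_cases hlow : a₀ + a₁ + 1 < 2 ^ r
      · obtain ⟨b₀, b₁, hb₀, hb₁, hs₀, hs₁, hsum⟩ := ih h₀' h₁' hlow
        refine ⟨2 ^ r + b₀, b₁, by omega, by omega, ?_, hs₁, by omega⟩
        rw [two_pow_add_eq_two_pow_or hb₀]
        exact hs₀.or_of_right _
      · refine ⟨2 ^ r + a₀, 2 ^ r + a₁, by omega, by omega, ?_, ?_, by omega⟩
        · rw [two_pow_add_eq_two_pow_or h₀']
          exact (Shadow2.refl _).or_of_right _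
        · rw [two_pow_add_eq_two_pow_or h₁']
          exact (Shadow2.refl _).or_of_right _
    · obtain ⟨b₀, b₁, hb₀, hb₁, hs₀, hs₁, hsum⟩ :=
        ih (a₀ := a₀ - 2 ^ r) (by omega) h₁' (by omega)
      refine ⟨2 ^ r + b₀, 2 ^ r + b₁, by omega, by omega, ?_, ?_, by omega⟩
      · rw [two_pow_add_eq_two_pow_or hb₀, show a₀ = 2 ^ r + (a₀ - 2 ^ r) by omega,
          two_pow_add_eq_two_pow_or (by omega : a₀ - 2 ^ r < 2 ^ r)]
        exact hs₀.or_mono_left _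
      · rw [two_pow_add_eq_two_pow_or hb₁]
        exact hs₁.or_of_right _

theorem and_eq_zero_of_shadow2_two_pow_sub_succ {r a c₀ c₁ : ℕ} (ha : a < 2 ^ r)
    (h₀ : Shadow2 c₀ a) (h₁ : Shadow2 c₁ (2 ^ r - (a + 1))) : c₀ &&& c₁ = 0 := by
  refine Nat.eq_of_testBit_eq fun i => ?_
  rw [Nat.testBit_and, Nat.zero_testBit, Bool.and_eq_false_iff]
  by_contra! hboth
  simp only [ne_eq, Bool.not_eq_false] at hboth
  simpa [Nat.testBit_two_pow_sub_succ ha, h₀ i hboth.1] using h₁ i hboth.2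

theorem shadow2_two_pow_sub_succ {r a c : ℕ} (ha : a < 2 ^ r) (hc : c < 2 ^ r)
    (h : a &&& c = 0) : Shadow2 c (2 ^ r - (a + 1)) := by
  intro i hi
  have hir : i < r := (Nat.pow_lt_pow_iff_right (by norm_num)).1
    ((Nat.ge_two_pow_of_testBit hi).trans_lt hc)
  have hai : a.testBit i = false := by
    simpa [hi] using congrArg (Nat.testBit · i) h
  simp [Nat.testBit_two_pow_sub_succ ha, hir, hai]

namespace IsWitness

variable {r y c₀ c₁ a₀ a₁ : ℕ}

theorem add_eq_or_add_eq_add_two_pow (h : IsWitness r y c₀ c₁ a₀ a₁) :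
    a₀ + a₁ = y ∨ a₀ + a₁ = y + 2 ^ r := by
  obtain ⟨h₀, h₁, -, -, rfl⟩ := h
  by_cases hs : a₀ + a₁ < 2 ^ r
  · exact .inl (Nat.mod_eq_of_lt hs).symm
  · right
    rw [Nat.mod_eq_sub_mod (by omega), Nat.mod_eq_of_lt (by omega)]
    omega

theorem exists_carry (h : IsWitness r y c₀ c₁ a₀ a₁) (hs : a₀ + a₁ + 1 < 2 ^ r) :
    ∃ b₀ b₁, IsWitness r y c₀ c₁ b₀ b₁ ∧ 2 ^ r - 1 < b₀ + b₁ := by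
  obtain ⟨h₀, h₁, hc₀, hc₁, hy⟩ := h
  obtain ⟨b₀, b₁, hb₀, hb₁, hs₀, hs₁, hsum⟩ := exists_shadow2_add_eq_add_two_pow r h₀ h₁ hs
  refine ⟨b₀, b₁, ⟨hb₀, hb₁, hc₀.trans hs₀, hc₁.trans hs₁, ?_⟩, by omega⟩
  rw [hsum, Nat.add_mod_right, hy]

end IsWitness

theorem mem_noCarry_iff {r y c₀ c₁ : ℕ} :
    (y, c₀, c₁) ∈ noCarry r ↔ y = 2 ^ r - 1 ∧ c₀ < 2 ^ r ∧ c₁ < 2 ^ r ∧ c₀ &&& c₁ = 0 := by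
  have hpos := Nat.two_pow_pos r
  simp only [noCarry, triples, Finset.mem_filter, Finset.mem_product, Finset.mem_range]
  constructor
  · rintro ⟨⟨hy, hc₀, hc₁⟩, ⟨a₀, a₁, hw⟩, hall⟩
    have hsum : a₀ + a₁ = y := by
      have := hall a₀ a₁ hw
      rcases hw.add_eq_or_add_eq_add_two_pow with h | h <;> omega
    replace hy : y = 2 ^ r - 1 := by
      by_contra hne
      obtain ⟨b₀, b₁, hb, hcarry⟩ := hw.exists_carry (by omega)
      exact absurd (hall b₀ b₁ hb) (by omega)
    obtain ⟨ha₀, -, hs₀, hs₁, -⟩ := hw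
    rw [show a₁ = 2 ^ r - (a₀ + 1) by omega] at hs₁
    exact ⟨hy, hc₀, hc₁, and_eq_zero_of_shadow2_two_pow_sub_succ ha₀ hs₀ hs₁⟩
  · rintro ⟨rfl, hc₀, hc₁, hdisj⟩
    refine ⟨⟨by omega, hc₀, hc₁⟩, ⟨c₀, 2 ^ r - (c₀ + 1), hc₀, by omega, Shadow2.refl _,
      shadow2_two_pow_sub_succ hc₀ hc₁ hdisj, ?_⟩, fun a₀ a₁ hw => ?_⟩
    · rw [Nat.mod_eq_of_lt (by omega)]
      omega
    · have := hw.1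
      have := hw.2.1
      rcases hw.add_eq_or_add_eq_add_two_pow with h | h <;> omega

def disjointPairs (r : ℕ) : Finset (ℕ × ℕ) :=
  (Finset.range (2 ^ r) ×ˢ Finset.range (2 ^ r)).filter fun c => c.1 &&& c.2 = 0

theorem bit_mem_disjointPairs_succ_iff {r : ℕ} {b₀ b₁ : Bool} {c₀ c₁ : ℕ} :
    (Nat.bit b₀ c₀, Nat.bit b₁ c₁) ∈ disjointPairs (r + 1) ↔
      !(b₀ && b₁) ∧ (c₀, c₁) ∈ disjointPairs r := by
  simp only [disjointPairs, Finset.mem_filter, Finset.mem_product, Finset.mem_range,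
    Nat.bit_lt_two_pow_succ_iff, Nat.land_bit, Nat.bit_eq_zero_iff, Bool.not_eq_true']
  tauto

/-- `((b₀, b₁), (c₀, c₁)) ↦ (bit b₀ c₀, bit b₁ c₁)`. -/
def bitPairEquiv : (Bool × Bool) × (ℕ × ℕ) ≃ ℕ × ℕ :=
  (Equiv.prodProdProdComm Bool Bool ℕ ℕ).trans
    (Equiv.boolProdNatEquivNat.prodCongr Equiv.boolProdNatEquivNat)

theorem disjointPairs_succ (r : ℕ) :
    disjointPairs (r + 1) =
      ((Finset.univ.filter fun b : Bool × Bool => !(b.1 && b.2)) ×ˢ disjointPairs r).map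
        bitPairEquiv.toEmbedding := by
  ext c
  obtain ⟨⟨⟨b₀, b₁⟩, c₀, c₁⟩, rfl⟩ := bitPairEquiv.surjective c
  rw [Finset.mem_map_equiv, Equiv.symm_apply_apply]
  simpa [bitPairEquiv] using bit_mem_disjointPairs_succ_iff

theorem card_disjointPairs (r : ℕ) : (disjointPairs r).card = 3 ^ r := by
  induction r with
  | zero => decide
  | succ r ih =>
    rw [disjointPairs_succ, Finset.card_map, Finset.card_product, ih, pow_succ']
    rfl

theorem noCarry_eq_product (r : ℕ) : noCarry r = {2 ^ r - 1} ×ˢ disjointPairs r := by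
  ext ⟨y, c₀, c₁⟩
  simp only [mem_noCarry_iff, Finset.mem_product, Finset.mem_singleton, disjointPairs,
    Finset.mem_filter, Finset.mem_range]
  tauto

theorem card_noCarry (r : ℕ) : (noCarry r).card = 3 ^ r := by
  rw [noCarry_eq_product, Finset.card_product, Finset.card_singleton, one_mul,
    card_disjointPairs]

/-- `|noCarry(r+1)| = 3 |noCarry(r)|`. -/
theorem noCarry_recursion (r : ℕ) :
    (noCarry (r + 1)).card = 3 * (noCarry r).card := by
  rw [card_noCarry, card_noCarry, pow_succ']
end

section
/- With noCarry, yesCarry, maybeCarry as defined for valid triples of length r, the following recursions hold: |yesCarry(r+1)| = 3|noCarry(r)| + 6|yesCarry(r)| + 4|maybeCarry(r)|, and |maybeCarry(r+1)| = |noCarry(r)| + |yesCarry(r)| + 4|maybeCarry(r)|. -/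
/-!
Write a length-`(r+1)` number as a length-`r` number plus `2^r` times a top bit. A witness
`(a₀, a₁)` of length `r + 1` is then a witness `(b₀, b₁)` of length `r` for the lower parts,
with carry `k = (b₀ + b₁) / 2^r`, together with top bits `t₀ ≥ d₀`, `t₁ ≥ d₁` (the top bits of
`c₀, c₁`) such that `k + t₀ + t₁ ≡ e (mod 2)` (the top bit of `y`); its own carry is
`(k + t₀ + t₁) / 2`. So the set of carries realised by a triple of length `r + 1` is obtained
from the carry set of its lower part by one step of a full adder, which depends only on the
top bits. The classes noCarry, yesCarry, maybeCarry are the triples with carry set `{0}`,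
`{1}`, `{0, 1}`, and the recursions follow by counting, for each of the four possible carry
sets, the eight top-bit patterns the full adder sends to `{1}` and to `{0, 1}`.
-/
open scoped Classical

open Finset

theorem shadow2_iff_mod_div (r c a : ℕ) :
    Shadow2 c a ↔ Shadow2 (c % 2 ^ r) (a % 2 ^ r) ∧ Shadow2 (c / 2 ^ r) (a / 2 ^ r) := by
  simp only [Shadow2, Nat.testBit_mod_two_pow, Nat.testBit_div_two_pow, Bool.and_eq_true,
    decide_eq_true_eq]
  refine ⟨fun h => ⟨fun i hi => ⟨hi.1, h i hi.2⟩, fun i => h (i + r)⟩, fun ⟨hlow, hhigh⟩ i hi => ?_⟩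
  rcases lt_or_ge i r with hir | hir
  · exact (hlow i ⟨hir, hi⟩).2
  · simpa [Nat.sub_add_cancel hir] using hhigh (i - r) (by simpa [Nat.sub_add_cancel hir])

theorem shadow2_iff_le {d t : ℕ} (ht : t < 2) : Shadow2 d t ↔ d ≤ t := by
  refine ⟨Nat.le_of_testBit, fun hdt => ?_⟩
  obtain rfl | rfl : d = 0 ∨ d = t := by omega
  · simp [Shadow2]
  · exact fun _ => id

theorem mod_two_pow_succ_eq_iff {r n y e : ℕ} (hy : y < 2 ^ r) :
    n % 2 ^ (r + 1) = y + 2 ^ r * e ↔ n % 2 ^ r = y ∧ n / 2 ^ r % 2 = e := by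
  have hr : 0 < 2 ^ r := Nat.two_pow_pos r
  rw [pow_succ, Nat.mod_mul]
  constructor
  · intro h
    have hmod := congrArg (· % 2 ^ r) h
    have hdiv := congrArg (· / 2 ^ r) h
    simp only [Nat.add_mul_mod_self_left, Nat.mod_mod, Nat.mod_eq_of_lt hy] at hmod
    simp only [Nat.add_mul_div_left _ _ hr, Nat.div_eq_of_lt (Nat.mod_lt _ hr),
      Nat.div_eq_of_lt hy, zero_add] at hdiv
    exact ⟨hmod, hdiv⟩
  · rintro ⟨rfl, rfl⟩
    rfl

theorem add_two_pow_mul_lt_two_pow_succ {r b t : ℕ} (hb : b < 2 ^ r) (ht : t < 2) :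
    b + 2 ^ r * t < 2 ^ (r + 1) := by
  have : 2 ^ r * t ≤ 2 ^ r * 1 := Nat.mul_le_mul_left _ (by omega)
  rw [pow_succ]
  omega

theorem shadow2_add_two_pow_mul_iff {r c d b t : ℕ} (hc : c < 2 ^ r) (hb : b < 2 ^ r) (ht : t < 2) :
    Shadow2 (c + 2 ^ r * d) (b + 2 ^ r * t) ↔ Shadow2 c b ∧ d ≤ t := by
  have hr : 0 < 2 ^ r := Nat.two_pow_pos r
  rw [shadow2_iff_mod_div r, ← shadow2_iff_le ht]
  simp only [Nat.add_mul_mod_self_left, Nat.mod_eq_of_lt hc, Nat.mod_eq_of_lt hb,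
    Nat.add_mul_div_left _ _ hr, Nat.div_eq_of_lt hc, Nat.div_eq_of_lt hb, zero_add]

theorem isWitness_succ_iff {r y c₀ c₁ e d₀ d₁ b₀ b₁ t₀ t₁ : ℕ} (hy : y < 2 ^ r)
    (hc₀ : c₀ < 2 ^ r) (hc₁ : c₁ < 2 ^ r) (hb₀ : b₀ < 2 ^ r) (hb₁ : b₁ < 2 ^ r)
    (ht₀ : t₀ < 2) (ht₁ : t₁ < 2) :
    IsWitness (r + 1) (y + 2 ^ r * e) (c₀ + 2 ^ r * d₀) (c₁ + 2 ^ r * d₁)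
        (b₀ + 2 ^ r * t₀) (b₁ + 2 ^ r * t₁) ↔
      IsWitness r y c₀ c₁ b₀ b₁ ∧ d₀ ≤ t₀ ∧ d₁ ≤ t₁ ∧ ((b₀ + b₁) / 2 ^ r + t₀ + t₁) % 2 = e := by
  have hr : 0 < 2 ^ r := Nat.two_pow_pos r
  have hsum : b₀ + 2 ^ r * t₀ + (b₁ + 2 ^ r * t₁) = b₀ + b₁ + 2 ^ r * (t₀ + t₁) := by ring
  simp only [IsWitness, hsum, mod_two_pow_succ_eq_iff hy, Nat.add_mul_mod_self_left,
    Nat.add_mul_div_left _ _ hr, shadow2_add_two_pow_mul_iff hc₀ hb₀ ht₀,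
    shadow2_add_two_pow_mul_iff hc₁ hb₁ ht₁, add_two_pow_mul_lt_two_pow_succ hb₀ ht₀,
    add_two_pow_mul_lt_two_pow_succ hb₁ ht₁, hb₀, hb₁, true_and, ← add_assoc]
  tauto

theorem carry_succ {r b₀ b₁ t₀ t₁ : ℕ} :
    (b₀ + 2 ^ r * t₀ + (b₁ + 2 ^ r * t₁)) / 2 ^ (r + 1) = ((b₀ + b₁) / 2 ^ r + t₀ + t₁) / 2 := by
  have hsum : b₀ + 2 ^ r * t₀ + (b₁ + 2 ^ r * t₁) = b₀ + b₁ + 2 ^ r * (t₀ + t₁) := by ring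
  rw [hsum, pow_succ, ← Nat.div_div_eq_div_mul, Nat.add_mul_div_left _ _ (Nat.two_pow_pos r),
    add_assoc]

def withTopBits (r : ℕ) (E v : ℕ × ℕ × ℕ) : ℕ × ℕ × ℕ :=
  (v.1 + 2 ^ r * E.1, v.2.1 + 2 ^ r * E.2.1, v.2.2 + 2 ^ r * E.2.2)

noncomputable def carrySet (r : ℕ) (v : ℕ × ℕ × ℕ) : Finset ℕ :=
  (range 2).filter fun k => ∃ a₀ a₁, IsWitness r v.1 v.2.1 v.2.2 a₀ a₁ ∧ (a₀ + a₁) / 2 ^ r = k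

/-- `E = (e, d₀, d₁)` are the top bits of `(y, c₀, c₁)`; `p = (k, t₀, t₁)` runs over incoming
carries and top bits of `a₀, a₁`. -/
def adderStep (E : ℕ × ℕ × ℕ) (K : Finset ℕ) : Finset ℕ :=
  ((K ×ˢ range 2 ×ˢ range 2).filter fun p =>
      E.2.1 ≤ p.2.1 ∧ E.2.2 ≤ p.2.2 ∧ (p.1 + p.2.1 + p.2.2) % 2 = E.1).image
    fun p => (p.1 + p.2.1 + p.2.2) / 2

theorem carry_lt_two {r y c₀ c₁ a₀ a₁ : ℕ} (h : IsWitness r y c₀ c₁ a₀ a₁) :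
    (a₀ + a₁) / 2 ^ r < 2 := by
  rw [Nat.div_lt_iff_lt_mul (Nat.two_pow_pos r)]
  have := h.1; have := h.2.1
  omega

theorem mem_carrySet {r k : ℕ} {v : ℕ × ℕ × ℕ} :
    k ∈ carrySet r v ↔ ∃ a₀ a₁, IsWitness r v.1 v.2.1 v.2.2 a₀ a₁ ∧ (a₀ + a₁) / 2 ^ r = k := by
  rw [carrySet, mem_filter, mem_range, and_iff_right_iff_imp]
  rintro ⟨a₀, a₁, h, rfl⟩
  exact carry_lt_two h

theorem mem_triples {r : ℕ} {v : ℕ × ℕ × ℕ} :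
    v ∈ triples r ↔ v.1 < 2 ^ r ∧ v.2.1 < 2 ^ r ∧ v.2.2 < 2 ^ r := by
  simp [triples]

theorem carrySet_withTopBits {r : ℕ} {E v : ℕ × ℕ × ℕ} (hv : v ∈ triples r) :
    carrySet (r + 1) (withTopBits r E v) = adderStep E (carrySet r v) := by
  obtain ⟨hy, hc₀, hc₁⟩ := mem_triples.mp hv
  have hr : 0 < 2 ^ r := Nat.two_pow_pos r
  ext k'
  simp only [mem_carrySet, adderStep, mem_filter, mem_image, mem_product, mem_range,
    withTopBits, Prod.exists]
  constructor
  · rintro ⟨A₀, A₁, hA, rfl⟩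
    have ht₀ : A₀ / 2 ^ r < 2 := by
      rw [Nat.div_lt_iff_lt_mul hr, ← pow_succ']; exact hA.1
    have ht₁ : A₁ / 2 ^ r < 2 := by
      rw [Nat.div_lt_iff_lt_mul hr, ← pow_succ']; exact hA.2.1
    rw [← Nat.mod_add_div A₀ (2 ^ r), ← Nat.mod_add_div A₁ (2 ^ r)] at hA ⊢
    obtain ⟨hw, h₀, h₁, hparity⟩ :=
      (isWitness_succ_iff hy hc₀ hc₁ (Nat.mod_lt _ hr) (Nat.mod_lt _ hr) ht₀ ht₁).mp hA
    exact ⟨_, _, _, ⟨⟨⟨_, _, hw, rfl⟩, ht₀, ht₁⟩, h₀, h₁, hparity⟩, carry_succ.symm⟩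
  · rintro ⟨k, t₀, t₁, ⟨⟨⟨b₀, b₁, hw, rfl⟩, ht₀, ht₁⟩, h₀, h₁, hparity⟩, rfl⟩
    exact ⟨b₀ + 2 ^ r * t₀, b₁ + 2 ^ r * t₁,
      (isWitness_succ_iff hy hc₀ hc₁ hw.1 hw.2.1 ht₀ ht₁).mpr ⟨hw, h₀, h₁, hparity⟩, carry_succ⟩

noncomputable def carryClass (r : ℕ) (K : Finset ℕ) : Finset (ℕ × ℕ × ℕ) :=
  (triples r).filter fun v => carrySet r v = K

theorem div_two_pow_eq_zero_iff {r n : ℕ} : n / 2 ^ r = 0 ↔ n ≤ 2 ^ r - 1 := by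
  have := Nat.two_pow_pos r
  rw [Nat.div_eq_zero_iff_lt this]
  omega

theorem carry_eq_one_iff {r y c₀ c₁ a₀ a₁ : ℕ} (h : IsWitness r y c₀ c₁ a₀ a₁) :
    (a₀ + a₁) / 2 ^ r = 1 ↔ 2 ^ r - 1 < a₀ + a₁ := by
  have := carry_lt_two h
  rw [← not_le, ← div_two_pow_eq_zero_iff]
  generalize (a₀ + a₁) / 2 ^ r = k at *
  omega

theorem noCarry_eq_carryClass (r : ℕ) : noCarry r = carryClass r {0} := by
  refine filter_congr fun v _ => ?_
  simp only [eq_singleton_iff_unique_mem, mem_carrySet, div_two_pow_eq_zero_iff]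
  constructor
  · rintro ⟨⟨a₀, a₁, hw⟩, hall⟩
    refine ⟨⟨a₀, a₁, hw, hall _ _ hw⟩, ?_⟩
    rintro _ ⟨b₀, b₁, hw', rfl⟩
    exact div_two_pow_eq_zero_iff.mpr (hall _ _ hw')
  · rintro ⟨⟨a₀, a₁, hw, -⟩, hall⟩
    exact ⟨⟨a₀, a₁, hw⟩, fun b₀ b₁ hw' => div_two_pow_eq_zero_iff.mp (hall _ ⟨b₀, b₁, hw', rfl⟩)⟩

theorem yesCarry_eq_carryClass (r : ℕ) : yesCarry r = carryClass r {1} := by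
  refine filter_congr fun v _ => ?_
  simp only [eq_singleton_iff_unique_mem, mem_carrySet]
  constructor
  · rintro ⟨⟨a₀, a₁, hw⟩, hall⟩
    refine ⟨⟨a₀, a₁, hw, (carry_eq_one_iff hw).mpr (hall _ _ hw)⟩, ?_⟩
    rintro _ ⟨b₀, b₁, hw', rfl⟩
    exact (carry_eq_one_iff hw').mpr (hall _ _ hw')
  · rintro ⟨⟨a₀, a₁, hw, -⟩, hall⟩
    exact ⟨⟨a₀, a₁, hw⟩, fun b₀ b₁ hw' => (carry_eq_one_iff hw').mp (hall _ ⟨b₀, b₁, hw', rfl⟩)⟩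

theorem maybeCarry_eq_carryClass (r : ℕ) : maybeCarry r = carryClass r {0, 1} := by
  refine filter_congr fun v _ => ?_
  have hsub : carrySet r v ⊆ {0, 1} := filter_subset _ _
  rw [Subset.antisymm_iff, and_iff_right hsub, insert_subset_iff, singleton_subset_iff,
    mem_carrySet, mem_carrySet]
  simp only [div_two_pow_eq_zero_iff]
  refine and_congr Iff.rfl ⟨?_, ?_⟩ <;> rintro ⟨a₀, a₁, hw, h⟩
  · exact ⟨a₀, a₁, hw, (carry_eq_one_iff hw).mpr h⟩
  · exact ⟨a₀, a₁, hw, (carry_eq_one_iff hw).mp h⟩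

theorem card_filter_triples_succ (r : ℕ) (p : ℕ × ℕ × ℕ → Prop) [DecidablePred p] :
    #{w ∈ triples (r + 1) | p w} = #{q ∈ triples 1 ×ˢ triples r | p (withTopBits r q.1 q.2)} := by
  have hr : 0 < 2 ^ r := Nat.two_pow_pos r
  have hsplit (w : ℕ × ℕ × ℕ) : withTopBits r (w.1 / 2 ^ r, w.2.1 / 2 ^ r, w.2.2 / 2 ^ r)
      (w.1 % 2 ^ r, w.2.1 % 2 ^ r, w.2.2 % 2 ^ r) = w := by
    simp only [withTopBits, Nat.mod_add_div]
  have hdiv {n : ℕ} (hn : n < 2 ^ (r + 1)) : n / 2 ^ r < 2 ^ 1 := by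
    rwa [Nat.div_lt_iff_lt_mul hr, ← pow_add, add_comm]
  symm
  refine card_nbij' (fun q => withTopBits r q.1 q.2)
    (fun w => ((w.1 / 2 ^ r, w.2.1 / 2 ^ r, w.2.2 / 2 ^ r),
      (w.1 % 2 ^ r, w.2.1 % 2 ^ r, w.2.2 % 2 ^ r))) ?_ ?_ ?_ ?_
  · rintro ⟨E, v⟩ hq
    simp only [coe_filter, mem_product, mem_triples, Set.mem_ofPred_eq, pow_one] at hq ⊢
    obtain ⟨⟨⟨he, hd₀, hd₁⟩, hy, hc₀, hc₁⟩, hp⟩ := hq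
    exact ⟨⟨add_two_pow_mul_lt_two_pow_succ hy he, add_two_pow_mul_lt_two_pow_succ hc₀ hd₀,
      add_two_pow_mul_lt_two_pow_succ hc₁ hd₁⟩, hp⟩
  · rintro w hw
    simp only [coe_filter, mem_product, mem_triples, Set.mem_ofPred_eq] at hw ⊢
    obtain ⟨⟨hy, hc₀, hc₁⟩, hp⟩ := hw
    exact ⟨⟨⟨hdiv hy, hdiv hc₀, hdiv hc₁⟩, Nat.mod_lt _ hr, Nat.mod_lt _ hr, Nat.mod_lt _ hr⟩,
      by rwa [hsplit]⟩
  · rintro ⟨E, v⟩ hq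
    simp only [coe_filter, mem_product, mem_triples, Set.mem_ofPred_eq, pow_one] at hq
    obtain ⟨⟨⟨he, hd₀, hd₁⟩, hy, hc₀, hc₁⟩, -⟩ := hq
    simp only [withTopBits, Nat.add_mul_div_left _ _ hr, Nat.add_mul_mod_self_left,
      Nat.div_eq_of_lt, Nat.mod_eq_of_lt, hy, hc₀, hc₁, zero_add]
  · exact fun w _ => hsplit w

theorem card_carryClass_succ (r : ℕ) (S : Finset ℕ) :
    #(carryClass (r + 1) S) =
      ∑ K ∈ (range 2).powerset, #{E ∈ triples 1 | adderStep E K = S} * #(carryClass r K) := by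
  rw [carryClass, card_filter_triples_succ,
    filter_congr fun q hq => by rw [carrySet_withTopBits (mem_product.mp hq).2],
    card_eq_sum_card_fiberwise (f := fun q => carrySet r q.2) (t := (range 2).powerset)
      fun q _ => mem_powerset.mpr (filter_subset _ _)]
  refine sum_congr rfl fun K _ => ?_
  rw [← card_product, carryClass, filter_filter, ← filter_product]
  congr 1
  refine filter_congr fun q _ => ?_
  constructor
  · rintro ⟨h, rfl⟩; exact ⟨h, rfl⟩
  · rintro ⟨h, rfl⟩; exact ⟨h, rfl⟩

theorem sum_powerset_range_two {M : Type*} [AddCommMonoid M] (f : Finset ℕ → M) :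
    ∑ K ∈ (range 2).powerset, f K = f ∅ + f {0} + f {1} + f {0, 1} := by
  rw [show (range 2).powerset = {∅, {0}, {1}, {0, 1}} by decide,
    sum_insert (by decide), sum_insert (by decide), sum_pair (by decide)]
  abel

/-- `|yesCarry(r+1)| = 3|noCarry(r)| + 6|yesCarry(r)| + 4|maybeCarry(r)|` and
`|maybeCarry(r+1)| = |noCarry(r)| + |yesCarry(r)| + 4|maybeCarry(r)|`. -/
theorem carry_recursions (r : ℕ) :
    (yesCarry (r + 1)).card
        = 3 * (noCarry r).card + 6 * (yesCarry r).card + 4 * (maybeCarry r).card ∧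
    (maybeCarry (r + 1)).card
        = (noCarry r).card + (yesCarry r).card + 4 * (maybeCarry r).card := by
  obtain ⟨y₀, y₁, y₂, y₃⟩ : #{E ∈ triples 1 | adderStep E ∅ = {1}} = 0 ∧
      #{E ∈ triples 1 | adderStep E {0} = {1}} = 3 ∧
      #{E ∈ triples 1 | adderStep E {1} = {1}} = 6 ∧
      #{E ∈ triples 1 | adderStep E {0, 1} = {1}} = 4 := by decide
  obtain ⟨m₀, m₁, m₂, m₃⟩ : #{E ∈ triples 1 | adderStep E ∅ = {0, 1}} = 0 ∧
      #{E ∈ triples 1 | adderStep E {0} = {0, 1}} = 1 ∧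
      #{E ∈ triples 1 | adderStep E {1} = {0, 1}} = 1 ∧
      #{E ∈ triples 1 | adderStep E {0, 1} = {0, 1}} = 4 := by decide
  simp only [noCarry_eq_carryClass, yesCarry_eq_carryClass, maybeCarry_eq_carryClass,
    card_carryClass_succ, sum_powerset_range_two, y₀, y₁, y₂, y₃, m₀, m₁, m₂, m₃]
  omega
end

section
/- Every valid pair (i, c) with i < 2^{ℓ/2} − 1 and c < 2^ℓ − 1 (meaning there exists a < 2^ℓ with a ≡ i (mod 2^{ℓ/2} − 1) and c ≤₂ a) is supported by at least one valid triple of length ℓ/2: writing c = c₀·2^{ℓ/2} + c₁ with c₀, c₁ ∈ [2^{ℓ/2}], there exists y ∈ [2^{ℓ/2}] and a witness (a₀, a₁) for the validity of (y, c₀, c₁) with a₀ + a₁ ≡ i (mod 2^{ℓ/2} − 1). -/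
namespace Shadow2

variable {c a : ℕ}

theorem div_two_pow (h : Shadow2 c a) (r : ℕ) : Shadow2 (c / 2 ^ r) (a / 2 ^ r) := by
  intro j hj
  rw [Nat.testBit_div_two_pow] at hj ⊢
  exact h _ hj

theorem mod_two_pow (h : Shadow2 c a) (r : ℕ) : Shadow2 (c % 2 ^ r) (a % 2 ^ r) := by
  intro j hj
  rw [Nat.testBit_mod_two_pow, Bool.and_eq_true] at hj ⊢
  exact ⟨hj.1, h _ hj.2⟩

end Shadow2

theorem Nat.div_add_mod_modEq_sub_one (a b : ℕ) : a / b + a % b ≡ a [MOD b - 1] := by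
  have hsplit : a = a / b + a % b + (b - 1) * (a / b) := by
    rcases b with _ | k
    · simp
    · have := Nat.div_add_mod a (k + 1)
      simp only [Nat.add_sub_cancel]
      linarith
  conv_rhs => rw [hsplit]
  exact (Nat.add_mul_mod_self_left _ _ _).symm

theorem valid_pair_supported_general (r : ℕ) (i c a : ℕ)
    (ha : a < 2 ^ (2 * r))
    (hmod : a % (2 ^ r - 1) = i) (hsh : Shadow2 c a) :
    ∃ y < 2 ^ r, ∃ a₀ < 2 ^ r, ∃ a₁ < 2 ^ r,
      Shadow2 (c / 2 ^ r) a₀ ∧ Shadow2 (c % 2 ^ r) a₁ ∧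
      (a₀ + a₁) % 2 ^ r = y ∧ (a₀ + a₁) % (2 ^ r - 1) = i := by
  have hpos : 0 < 2 ^ r := Nat.two_pow_pos r
  have ha₀ : a / 2 ^ r < 2 ^ r := Nat.div_lt_of_lt_mul (by rwa [← pow_add, ← two_mul])
  refine ⟨_, Nat.mod_lt _ hpos, a / 2 ^ r, ha₀, a % 2 ^ r, Nat.mod_lt _ hpos,
    hsh.div_two_pow r, hsh.mod_two_pow r, rfl, ?_⟩
  rw [← hmod]
  exact Nat.div_add_mod_modEq_sub_one a _

/-- Every valid pair `(i, c)` (with `i < 2^(ℓ/2) - 1`, `c < 2^ℓ - 1` and a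
witness `a < 2^ℓ`, `a ≡ i (mod 2^(ℓ/2) - 1)`, `c ≤₂ a`) is supported by a valid
triple of length `r = ℓ/2`: writing `c₀ = c / 2^r`, `c₁ = c % 2^r`, there is a
`y ∈ [2^r]` and a witness `(a₀, a₁)` for `(y, c₀, c₁)` with
`a₀ + a₁ ≡ i (mod 2^r - 1)`. -/
theorem valid_pair_supported (r : ℕ) (i c a : ℕ)
    (hi : i < 2 ^ r - 1) (hc : c < 2 ^ (2 * r) - 1) (ha : a < 2 ^ (2 * r))
    (hmod : a % (2 ^ r - 1) = i) (hsh : Shadow2 c a) :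
    ∃ y < 2 ^ r, ∃ a₀ < 2 ^ r, ∃ a₁ < 2 ^ r,
      Shadow2 (c / 2 ^ r) a₀ ∧ Shadow2 (c % 2 ^ r) a₁ ∧
      (a₀ + a₁) % 2 ^ r = y ∧ (a₀ + a₁) % (2 ^ r - 1) = i :=
  valid_pair_supported_general r i c a ha hmod hsh
end

section
/- Let q = 2^ℓ, and let F₀ be the set of univariate polynomials over F_q of degree < q−1. Let L be a family of parameterized affine lines in F_q² such that every point of F_q² lies on at least s pairwise non-equivalent lines of L. Then the evaluation code of the partial lift of F₀ with respect to L (bivariate polynomials P such that P|_L ∈ F₀ for all L ∈ L) is a linear code of length q² with the s-DRGP: each symbol P(x,y) equals the sum of the values of P on the other q−1 points of any line of L through (x,y), and lines through (x,y) intersect pairwise only at (x,y). -/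
open Polynomial

/-- The image of the parameterized affine line `L(T) = (αT + β, γT + δ)`,
encoded as `L = ((α, β), (γ, δ))`. -/
def lineImage {F : Type*} [Field F] (L : (F × F) × (F × F)) : Set (F × F) :=
  Set.range (fun t : F => (L.1.1 * t + L.1.2, L.2.1 * t + L.2.2))

/-- A bivariate polynomial `P` restricts nicely on the line `L`: the reduction
mod `T^q - T` of `P(αT + β, γT + δ)` has degree `< q - 1`. -/
def RestrictsNicely {F : Type*} [Field F] (q : ℕ)
    (P : MvPolynomial (Fin 2) F) (L : (F × F) × (F × F)) : Prop :=
  ((MvPolynomial.aeval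
      ![C L.1.1 * X + C L.1.2, C L.2.1 * X + C L.2.2] P : F[X]) %ₘ (X ^ q - X)).degree
    < ((q - 1 : ℕ) : WithBot ℕ)

/-!
Over a field with `q` elements, `∑ t, t ^ i = 0` for `i < q - 1`, so a polynomial whose
restriction to a line has degree `< q - 1` sums to zero over that line: its value at a point `p`
is minus the sum of its values at the other `q - 1` points of the line. Distinct lines through `p`
meet only at `p`, so the punctured lines of `𝓛` through `p` are pairwise disjoint repair groups.
-/

section Lines

variable {F : Type*} [Field F]

def linePoint (L : (F × F) × (F × F)) (t : F) : F × F :=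
  (L.1.1 * t + L.1.2, L.2.1 * t + L.2.2)

theorem linePoint_injective {L : (F × F) × (F × F)}
    (hL : (L.1.1, L.2.1) ≠ ((0 : F), (0 : F))) : Function.Injective (linePoint L) := by
  intro t t' h
  by_contra hne
  simp_all [linePoint, Prod.ext_iff]

theorem lineImage_eq_affineSpan (L : (F × F) × (F × F)) :
    lineImage L = line[F, (L.1.2, L.2.2), (L.1.1 + L.1.2, L.2.1 + L.2.2)] := by
  ext z
  simp [lineImage, mem_affineSpan_pair_iff_exists_lineMap_eq, AffineMap.lineMap_apply,
    Prod.ext_iff, mul_comm]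

theorem lineImage_eq_of_mem_of_mem {L L' : (F × F) × (F × F)} {p x : F × F} (hpx : p ≠ x)
    (hp : p ∈ lineImage L) (hx : x ∈ lineImage L)
    (hp' : p ∈ lineImage L') (hx' : x ∈ lineImage L') :
    lineImage L = lineImage L' := by
  rw [lineImage_eq_affineSpan] at hp hx hp' hx' ⊢
  rw [lineImage_eq_affineSpan, ← affineSpan_pair_eq_of_mem_of_mem_of_ne hp hx hpx,
    ← affineSpan_pair_eq_of_mem_of_mem_of_ne hp' hx' hpx]

variable [Fintype F] [DecidableEq F]

def lineFinset (L : (F × F) × (F × F)) : Finset (F × F) :=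
  Finset.univ.image (linePoint L)

theorem mem_lineFinset {L : (F × F) × (F × F)} {x : F × F} :
    x ∈ lineFinset L ↔ x ∈ lineImage L := by
  simp [lineFinset, lineImage, linePoint]

theorem disjoint_erase_lineFinset {L L' : (F × F) × (F × F)}
    {p : F × F} (hp : p ∈ lineImage L) (hp' : p ∈ lineImage L')
    (hLL' : lineImage L ≠ lineImage L') :
    Disjoint ((lineFinset L).erase p) ((lineFinset L').erase p) := by
  refine Finset.disjoint_left.mpr fun x hx hx' => hLL' ?_
  rw [Finset.mem_erase, mem_lineFinset] at hx hx'
  exact lineImage_eq_of_mem_of_mem (Ne.symm hx.1) hp hx.2 hp' hx'.2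

end Lines

section Restriction

variable {F : Type*} [Field F]

theorem eval_aeval_line (P : MvPolynomial (Fin 2) F) (a b c d t : F) :
    (MvPolynomial.aeval ![C a * X + C b, C c * X + C d] P : F[X]).eval t
      = MvPolynomial.eval ![a * t + b, c * t + d] P := by
  have hpt : (fun i => aeval t (![C a * X + C b, C c * X + C d] i)) =
      ![a * t + b, c * t + d] := by
    funext i
    fin_cases i <;> simp
  rw [← coe_aeval_eq_eval, ← AlgHom.comp_apply, MvPolynomial.comp_aeval, hpt]
  rfl

variable [Fintype F]

theorem eval_modByMonic_X_pow_card_sub_X (f : F[X]) (t : F) :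
    (f %ₘ (X ^ Fintype.card F - X)).eval t = f.eval t := by
  conv_rhs => rw [← modByMonic_add_div f (X ^ Fintype.card F - X)]
  simp [FiniteField.pow_card]

theorem sum_eval_eq_zero_of_degree_lt (f : F[X]) (hf : f.degree < (Fintype.card F - 1 : ℕ)) :
    ∑ t : F, f.eval t = 0 := by
  rcases eq_or_ne f 0 with rfl | hf0
  · simp
  rw [← natDegree_lt_iff_degree_lt hf0] at hf
  simp_rw [eval_eq_sum_range' hf, Finset.sum_comm (γ := F), ← Finset.mul_sum]
  exact Finset.sum_eq_zero fun i hi =>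
    by rw [FiniteField.sum_pow_lt_card_sub_one F i (Finset.mem_range.mp hi), mul_zero]

theorem sum_eval_linePoint_eq_zero {P : MvPolynomial (Fin 2) F} {L : (F × F) × (F × F)}
    (hP : RestrictsNicely (Fintype.card F) P L) :
    ∑ t, MvPolynomial.eval ![(linePoint L t).1, (linePoint L t).2] P = 0 := by
  rw [← sum_eval_eq_zero_of_degree_lt _ hP]
  simp only [eval_modByMonic_X_pow_card_sub_X, eval_aeval_line, linePoint]

theorem eval_eq_of_eqOn_lineFinset_erase [DecidableEq F] {P Q : MvPolynomial (Fin 2) F}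
    {L : (F × F) × (F × F)} {p : F × F} (hL : (L.1.1, L.2.1) ≠ ((0 : F), (0 : F)))
    (hp : p ∈ lineImage L) (hP : RestrictsNicely (Fintype.card F) P L)
    (hQ : RestrictsNicely (Fintype.card F) Q L)
    (hPQ : ∀ x ∈ (lineFinset L).erase p,
      MvPolynomial.eval ![x.1, x.2] P = MvPolynomial.eval ![x.1, x.2] Q) :
    MvPolynomial.eval ![p.1, p.2] P = MvPolynomial.eval ![p.1, p.2] Q := by
  obtain ⟨t₀, rfl⟩ : p ∈ Set.range (linePoint L) := hp
  have hsum : ∑ t, (MvPolynomial.eval ![(linePoint L t).1, (linePoint L t).2] P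
      - MvPolynomial.eval ![(linePoint L t).1, (linePoint L t).2] Q) = 0 := by
    rw [Finset.sum_sub_distrib, sum_eval_linePoint_eq_zero hP, sum_eval_linePoint_eq_zero hQ,
      sub_zero]
  rw [Finset.sum_eq_single t₀ (fun t _ ht => sub_eq_zero.mpr (hPQ _ (Finset.mem_erase.mpr
      ⟨(linePoint_injective hL).ne ht, Finset.mem_image_of_mem _ (Finset.mem_univ t)⟩)))
    (by simp)] at hsum
  exact sub_eq_zero.mp hsum

end Restriction

/-- Partial lifts have the `s`-DRGP: if every point of `F_q²` lies on at least
`s` pairwise non-equivalent (non-degenerate) lines of `𝓛`, then the evaluation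
code of the partial lift of the parity-check code with respect to `𝓛` has `s`
pairwise disjoint repair groups for every coordinate: each symbol `P(x,y)` is
determined by the values of `P` on the other points of any line of `𝓛`
through `(x,y)`. -/
theorem partial_lift_drgp (ℓ : ℕ) (F : Type*) [Field F] [Fintype F]
    (hF : Fintype.card F = 2 ^ ℓ) (q : ℕ) (hq : q = 2 ^ ℓ)
    (𝓛 : Set ((F × F) × (F × F)))
    (hnd : ∀ L ∈ 𝓛, (L.1.1, L.2.1) ≠ ((0 : F), (0 : F)))
    (s : ℕ)
    (hcover : ∀ p : F × F, ∃ S : Finset ((F × F) × (F × F)),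
      s ≤ S.card ∧ ↑S ⊆ 𝓛 ∧
      (∀ L ∈ S, p ∈ lineImage L) ∧
      (∀ L ∈ S, ∀ L' ∈ S, L ≠ L' → lineImage L ≠ lineImage L')) :
    ∀ p : F × F, ∃ R : Fin s → Finset (F × F),
      (∀ i j, i ≠ j → Disjoint (R i) (R j)) ∧
      ∀ i, p ∉ R i ∧
        ∀ P Q : MvPolynomial (Fin 2) F,
          (∀ L ∈ 𝓛, RestrictsNicely q P L) →
          (∀ L ∈ 𝓛, RestrictsNicely q Q L) →
          (∀ x ∈ R i, MvPolynomial.eval ![x.1, x.2] P = MvPolynomial.eval ![x.1, x.2] Q) →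
          MvPolynomial.eval ![p.1, p.2] P = MvPolynomial.eval ![p.1, p.2] Q := by
  intro p
  obtain ⟨S, hScard, hS𝓛, hpS, hSdist⟩ := hcover p
  obtain ⟨e⟩ : Nonempty (Fin s ↪ S) :=
    Function.Embedding.nonempty_of_card_le (by simpa using hScard)
  rw [← hF] at hq
  subst hq
  classical
  refine ⟨fun i => (lineFinset (e i : (F × F) × (F × F))).erase p, fun i j hij => ?_,
    fun i => ⟨Finset.notMem_erase _ _, fun P Q hP hQ => ?_⟩⟩
  · exact disjoint_erase_lineFinset (hpS _ (e i).2) (hpS _ (e j).2)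
      (hSdist _ (e i).2 _ (e j).2 fun h => hij (e.injective (Subtype.ext h)))
  · exact eval_eq_of_eqOn_lineFinset_erase (hnd _ (hS𝓛 (e i).2)) (hpS _ (e i).2)
      (hP _ (hS𝓛 (e i).2)) (hQ _ (hS𝓛 (e i).2))
end
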